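/- arXiv:1404.0818 — 4 statements merged into one kernel-verified Lean document; each statement's English description precedes it below -/
import Mathlib

section
/- Let G be a finite graph, let S ⊆ V(G), and let F be a finite family of S-stable separations of G. Define X := S ∪ ⋃_{(A,B)∈F} (A ∩ B). Then for every connected component of G ∖ X with vertex set Z, one has |N_G(Z)| ≤ |S|. -/
/-!
Common definitions: separations, stable separations, the improved graph,
external neighbourhoods, connected components, clique separations, and
rooted tree decompositions together with treewidth.
-/

section Defs

variable {V : Type} [Fintype V] [DecidableEq V]

/-- A separation of a graph `G`: a pair `(A, B)` covering the vertex set with no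
edge between `A \ B` and `B \ A`.  Its order is `(A ∩ B).card`. -/
def IsSeparation (G : SimpleGraph V) (A B : Finset V) : Prop :=
  A ∪ B = Finset.univ ∧ ∀ a ∈ A, a ∉ B → ∀ b ∈ B, b ∉ A → ¬G.Adj a b

/-- An `X`–`Y` separation: a separation `(A, B)` with `X ⊆ A` and `Y ⊆ B`. -/
def IsSepFor (G : SimpleGraph V) (X Y A B : Finset V) : Prop :=
  IsSeparation G A B ∧ X ⊆ A ∧ Y ⊆ B

/-- An `X`–`Y` separation of minimum possible order. -/
def IsMinSepFor (G : SimpleGraph V) (X Y A B : Finset V) : Prop :=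
  IsSepFor G X Y A B ∧ ∀ A' B', IsSepFor G X Y A' B' → (A ∩ B).card ≤ (A' ∩ B').card

/-- A separation `(A, B)` is `S`-stable if it is a minimum-order `S_L`–`S_R`
separation for some partition `(S_L, S_R)` of `S`. -/
def IsStable (G : SimpleGraph V) (S A B : Finset V) : Prop :=
  ∃ SL SR, Disjoint SL SR ∧ SL ∪ SR = S ∧ IsMinSepFor G SL SR A B

/-- `conn_G(x, y) < k`: there is a separation of order `< k` with `x ∈ A ∖ B` and
`y ∈ B ∖ A`.  (For adjacent `x, y` no such separation exists, i.e. `conn = +∞`.) -/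
def ConnLt (G : SimpleGraph V) (x y : V) (k : ℕ) : Prop :=
  ∃ A B, IsSeparation G A B ∧ x ∈ A ∧ x ∉ B ∧ y ∈ B ∧ y ∉ A ∧ (A ∩ B).card < k

/-- A graph is `k`-complemented when `conn(x,y) ≥ k` implies that `x` and `y` are
adjacent; equivalently, any two distinct nonadjacent vertices are separated by a
separation of order `< k`. -/
def KComplemented (G : SimpleGraph V) (k : ℕ) : Prop :=
  ∀ x y, x ≠ y → ¬G.Adj x y → ConnLt G x y k

lemma IsSeparation.symm2 {G : SimpleGraph V} {A B : Finset V} (h : IsSeparation G A B) :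
    IsSeparation G B A :=
  ⟨by rw [Finset.union_comm]; exact h.1,
   fun a ha ha' b hb hb' hadj => h.2 b hb hb' a ha ha' hadj.symm⟩

/-- The `k`-improved graph `G^{(k)}`: same vertices, and `xy` is an edge
iff `conn_G(x,y) ≥ k` (in particular all edges of `G` are kept). -/
def improvedGraph (G : SimpleGraph V) (k : ℕ) : SimpleGraph V where
  Adj x y := x ≠ y ∧ ¬ConnLt G x y k
  symm := by
    constructor
    rintro x y ⟨hxy, h⟩
    refine ⟨hxy.symm, ?_⟩
    rintro ⟨A, B, hsep, hy, hy', hx, hx', hc⟩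
    exact h ⟨B, A, hsep.symm2, hx, hx', hy, hy', by rwa [Finset.inter_comm]⟩
  loopless := ⟨fun x h => h.1 rfl⟩

/-- The external neighbourhood `N_G(Z)`: vertices outside `Z` with a neighbour in `Z`. -/
def extNbhd (G : SimpleGraph V) (Z : Set V) : Set V :=
  {v | v ∉ Z ∧ ∃ z ∈ Z, G.Adj v z}

/-- `Z` is the vertex set of a connected component of `G - X`: it is disjoint from `X`,
induces a connected subgraph, and all its neighbours outside itself lie in `X`. -/
def IsCompAway (G : SimpleGraph V) (X Z : Set V) : Prop :=
  Disjoint Z X ∧ (G.induce Z).Connected ∧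
    ∀ ⦃v z : V⦄, z ∈ Z → G.Adj v z → v ∉ Z → v ∈ X

/-- The subgraph of `G` induced on `W` admits no clique separation: there is no
separation `(A, B)` of `G[W]` with `A ∖ B ≠ ∅`, `B ∖ A ≠ ∅` and `A ∩ B` a clique. -/
def CliqueSepFreeOn (G : SimpleGraph V) (W : Finset V) : Prop :=
  ¬∃ A B : Finset V, A ∪ B = W ∧
      (∀ a ∈ A, a ∉ B → ∀ b ∈ B, b ∉ A → ¬G.Adj a b) ∧
      (A \ B).Nonempty ∧ (B \ A).Nonempty ∧ G.IsClique (↑(A ∩ B) : Set V)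

/-- A rooted tree decomposition of the subgraph of `G` induced on `W`.
The rooted tree is given by a finite node type with a parent function
(every node reaches the root by iterating `parent`);
for every vertex of `W` the nodes whose bags contain it form a nonempty connected
subtree, and every edge of `G[W]` lies inside some bag. -/
structure RTDOn (V : Type) [Fintype V] [DecidableEq V] (G : SimpleGraph V) (W : Finset V) where
  ι : Type
  instFintype : Fintype ι
  instDecEq : DecidableEq ι
  root : ι
  parent : ι → ι
  parent_root : parent root = root
  reaches_root : ∀ t, ∃ n, parent^[n] t = root
  bag : ι → Finset V
  bag_subset : ∀ t, bag t ⊆ W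
  bags_connected : ∀ v ∈ W,
    ((SimpleGraph.fromRel fun s t => parent s = t).induce {t | v ∈ bag t}).Connected
  edge_in_bag : ∀ u ∈ W, ∀ v ∈ W, G.Adj u v → ∃ t, u ∈ bag t ∧ v ∈ bag t

/-- A rooted tree decomposition of `G`. -/
abbrev RTD (V : Type) [Fintype V] [DecidableEq V] (G : SimpleGraph V) : Type 1 :=
  RTDOn V G Finset.univ

namespace RTDOn

variable {G : SimpleGraph V} {W : Finset V}

instance (D : RTDOn V G W) : Fintype D.ι := D.instFintype
instance (D : RTDOn V G W) : DecidableEq D.ι := D.instDecEq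

/-- The decomposition has width at most `w`, i.e. all bags have size at most `w + 1`. -/
def widthLe (D : RTDOn V G W) (w : ℕ) : Prop := ∀ t, (D.bag t).card ≤ w + 1

/-- The decomposition has adhesion width at most `ℓ`: for every tree edge
`(t, parent t)` the intersection of the two bags has size at most `ℓ`. -/
def adhesionLe (D : RTDOn V G W) (l : ℕ) : Prop :=
  ∀ t, t ≠ D.root → (D.bag t ∩ D.bag (D.parent t)).card ≤ l

/-- A family of potential bags captures a decomposition if every bag belongs to it. -/
def captures (D : RTDOn V G W) (ℬ : Finset (Finset V)) : Prop := ∀ t, D.bag t ∈ ℬ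

/-- `γ(t)`: union of the bags at all descendants of `t`. -/
def gammaSet (D : RTDOn V G W) (t : D.ι) : Set V :=
  {v | ∃ s, (∃ n, D.parent^[n] s = t) ∧ v ∈ D.bag s}

/-- `σ(t)`: the adhesion of `t` with its parent (empty at the root). -/
def sigmaBag (D : RTDOn V G W) (t : D.ι) : Finset V :=
  if t = D.root then ∅ else D.bag t ∩ D.bag (D.parent t)

/-- `α(t) = γ(t) ∖ σ(t)`. -/
def alphaSet (D : RTDOn V G W) (t : D.ι) : Set V := D.gammaSet t \ ↑(D.sigmaBag t)

end RTDOn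

/-- A rooted tree decomposition is connectivity-sensitive when every `G[α(t)]`
is connected and `σ(t) = N_G(α(t))`. -/
def IsCSDecomp {G : SimpleGraph V} (D : RTD V G) : Prop :=
  ∀ t, (G.induce (D.alphaSet t)).Connected ∧ extNbhd G (D.alphaSet t) = ↑(D.sigmaBag t)

/-- The treewidth of `G`: the least `w` such that `G` has a (rooted) tree
decomposition of width at most `w`. -/
noncomputable def treewidth (G : SimpleGraph V) : ℕ :=
  sInf {w : ℕ | ∃ D : RTD V G, D.widthLe w}

/-- `ℬ^{≤q}`: all sets of size at most `q` contained in some member of `ℬ`. -/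
def belowFam (ℬ : Finset (Finset V)) (q : ℕ) : Finset (Finset V) :=
  Finset.univ.filter fun X => X.card ≤ q ∧ ∃ B ∈ ℬ, X ⊆ B

end Defs

/-!
Start from the separation `(S, V)` of order `|S|`, which has the component `Z` strictly on its
right. Each `(A, B) ∈ F` is an `S_L`–`S_R` separation of minimum order, and `Z`, being connected
and disjoint from `A ∩ B`, lies strictly on one side of it, say in `A ∖ B`. Uncrossing the current
separation `(P, Q)` with `(A, B)` gives `(P ∪ B, Q ∩ A)`: by submodularity of the order and the
minimality of `(A, B)` (the other corner `(Q ∪ A, P ∩ B)` is again an `S_L`–`S_R` separation) the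
order does not grow, `Z` stays strictly on the right, and now `A ∩ B` lies on the left. After all
of `F` has been absorbed, `X` lies on the left, so `N(Z) ⊆ X` lies in the separator.
-/

section Uncrossing

variable {V : Type} [Fintype V] [DecidableEq V] {G : SimpleGraph V}

lemma IsSeparation.mem_or_mem {A B : Finset V} (h : IsSeparation G A B) (x : V) :
    x ∈ A ∨ x ∈ B :=
  Finset.mem_union.1 (h.1 ▸ Finset.mem_univ x)

lemma IsSeparation.inter_union {A B C D : Finset V} (hAB : IsSeparation G A B)
    (hCD : IsSeparation G C D) : IsSeparation G (A ∩ C) (B ∪ D) := by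
  refine ⟨Finset.eq_univ_iff_forall.2 fun x => ?_, fun a ha ha' b hb hb' hadj => ?_⟩
  · have := hAB.mem_or_mem x
    have := hCD.mem_or_mem x
    simp only [Finset.mem_union, Finset.mem_inter]
    tauto
  · simp only [Finset.mem_union, Finset.mem_inter, not_or, not_and] at ha ha' hb hb'
    by_cases hbA : b ∈ A
    · exact hCD.2 a ha.2 ha'.2 b ((hCD.mem_or_mem b).resolve_left (hb' hbA)) (hb' hbA) hadj
    · exact hAB.2 a ha.1 ha'.1 b ((hAB.mem_or_mem b).resolve_left hbA) hbA hadj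

omit [Fintype V] in
lemma card_inter_inter_union_add_card_union_inter_inter_le (A B C D : Finset V) :
    (A ∩ C ∩ (B ∪ D)).card + ((A ∪ C) ∩ (B ∩ D)).card ≤ (A ∩ B).card + (C ∩ D).card := by
  rw [← Finset.card_union_add_card_inter, ← Finset.card_union_add_card_inter (A ∩ B)]
  refine add_le_add (Finset.card_le_card fun x => ?_) (Finset.card_le_card fun x => ?_) <;>
    simp only [Finset.mem_union, Finset.mem_inter] <;> tauto

lemma IsMinSepFor.symm {SL SR A B : Finset V} (h : IsMinSepFor G SL SR A B) :
    IsMinSepFor G SR SL B A := by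
  obtain ⟨⟨hsep, hSL, hSR⟩, hmin⟩ := h
  refine ⟨⟨hsep.symm2, hSR, hSL⟩, fun A' B' ⟨hsep', hSR', hSL'⟩ => ?_⟩
  rw [Finset.inter_comm B, Finset.inter_comm A']
  exact hmin B' A' ⟨hsep'.symm2, hSL', hSR'⟩

lemma IsMinSepFor.uncross {SL SR A B P Q : Finset V} (hmin : IsMinSepFor G SL SR A B)
    (hPQ : IsSeparation G P Q) (hSR : SR ⊆ P) :
    IsSeparation G (P ∪ B) (Q ∩ A) ∧ ((P ∪ B) ∩ (Q ∩ A)).card ≤ (P ∩ Q).card := by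
  obtain ⟨⟨hAB, hSLA, hSRB⟩, hminimal⟩ := hmin
  have hcorner : IsSepFor G SL SR (Q ∪ A) (P ∩ B) :=
    ⟨(hPQ.inter_union hAB.symm2).symm2, hSLA.trans Finset.subset_union_right,
      Finset.subset_inter hSR hSRB⟩
  have hle := hminimal _ _ hcorner
  have hsub := card_inter_inter_union_add_card_union_inter_inter_le P Q B A
  rw [Finset.inter_comm B A] at hsub
  rw [Finset.inter_comm (Q ∪ A)] at hle
  exact ⟨(hPQ.symm2.inter_union hAB).symm2, by omega⟩

lemma IsStable.isSeparation {S A B : Finset V} (h : IsStable G S A B) : IsSeparation G A B := by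
  obtain ⟨_, _, _, _, ⟨hsep, _⟩, _⟩ := h
  exact hsep

lemma IsSeparation.subset_sdiff_or_subset_sdiff {A B : Finset V} {Z : Set V}
    (hsep : IsSeparation G A B) (hconn : (G.induce Z).Preconnected)
    (hZ : Disjoint Z ↑(A ∩ B)) : Z ⊆ ↑(A \ B) ∨ Z ⊆ ↑(B \ A) := by
  have hside : ∀ z ∈ Z, z ∈ A \ B ∨ z ∈ B \ A := fun z hz => by
    have := hsep.mem_or_mem z
    have : z ∉ A ∩ B := Set.disjoint_left.1 hZ hz
    simp only [Finset.mem_sdiff, Finset.mem_inter] at *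
    tauto
  by_contra! ⟨hleft, hright⟩
  obtain ⟨z₁, hz₁, hz₁A⟩ := Set.not_subset.1 hleft
  obtain ⟨z₂, hz₂, hz₂B⟩ := Set.not_subset.1 hright
  obtain ⟨p⟩ := hconn ⟨z₂, hz₂⟩ ⟨z₁, hz₁⟩
  obtain ⟨d, -, hd₁, hd₂⟩ :=
    p.exists_boundary_dart {z : Z | (z : V) ∈ A \ B} ((hside z₂ hz₂).resolve_right hz₂B) hz₁A
  have hd₁ : (d.fst : V) ∈ A \ B := hd₁
  have hd₂ : (d.snd : V) ∈ B \ A := (hside _ d.snd.2).resolve_left hd₂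
  rw [Finset.mem_sdiff] at hd₁ hd₂
  exact hsep.2 _ hd₁.1 hd₁.2 _ hd₂.1 hd₂.2 d.adj

lemma IsSeparation.extNbhd_subset {P Q : Finset V} {Z : Set V} (hsep : IsSeparation G P Q)
    (hZ : Z ⊆ ↑(Q \ P)) : extNbhd G Z ⊆ ↑Q := fun y ⟨_, z, hz, hadj⟩ => by
  have hzQP := Finset.mem_sdiff.1 (hZ hz)
  by_contra hy
  exact hsep.2 y ((hsep.mem_or_mem y).resolve_right hy) hy z hzQP.1 hzQP.2 hadj

omit [Fintype V] [DecidableEq V] in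
lemma IsCompAway.extNbhd_subset {X Z : Set V} (h : IsCompAway G X Z) : extNbhd G Z ⊆ X :=
  fun _ ⟨hy, _, hz, hadj⟩ => h.2.2 hz hadj hy

lemma IsMinSepFor.absorb {SL SR A B P Q : Finset V} {Z : Set V}
    (hmin : IsMinSepFor G SL SR A B) (hPQ : IsSeparation G P Q) (hSR : SR ⊆ P)
    (hZPQ : Z ⊆ ↑(Q \ P)) (hZAB : Z ⊆ ↑(A \ B)) :
    IsSeparation G (P ∪ B) (Q ∩ A) ∧ Z ⊆ ↑((Q ∩ A) \ (P ∪ B)) ∧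
      ((P ∪ B) ∩ (Q ∩ A)).card ≤ (P ∩ Q).card := by
  refine ⟨(hmin.uncross hPQ hSR).1, fun z hz => ?_, (hmin.uncross hPQ hSR).2⟩
  have := hZPQ hz
  have := hZAB hz
  simp only [Finset.coe_sdiff, Finset.coe_inter, Finset.coe_union, Set.mem_sdiff,
    Set.mem_inter_iff, Set.mem_union, Finset.mem_coe] at *
  tauto

lemma exists_separation_absorbing {S : Finset V} {Z : Set V} (F : Finset (Finset V × Finset V))
    (hF : ∀ p ∈ F, IsStable G S p.1 p.2)
    (hside : ∀ p ∈ F, Z ⊆ ↑(p.1 \ p.2) ∨ Z ⊆ ↑(p.2 \ p.1)) (hZS : Disjoint Z ↑S) :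
    ∃ P Q, IsSeparation G P Q ∧ S ∪ F.sup (fun p => p.1 ∩ p.2) ⊆ P ∧ Z ⊆ ↑(Q \ P) ∧
      (P ∩ Q).card ≤ S.card := by
  induction F using Finset.induction_on with
  | empty =>
    refine ⟨S, Finset.univ, ⟨by simp, fun a _ ha _ _ _ => absurd (Finset.mem_univ a) ha⟩,
      by simp, ?_, by simp⟩
    rw [Finset.coe_sdiff, Finset.coe_univ, ← Set.compl_eq_univ_sdiff]
    exact Set.subset_compl_iff_disjoint_right.2 hZS
  | insert p F _ ih =>
    obtain ⟨P, Q, hPQ, hXP, hZ, hcard⟩ := ih (fun q hq => hF q (Finset.mem_insert_of_mem hq))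
      (fun q hq => hside q (Finset.mem_insert_of_mem hq))
    obtain ⟨SL, SR, -, rfl, hmin⟩ := hF p (Finset.mem_insert_self p F)
    have hSP : SL ∪ SR ⊆ P := Finset.subset_union_left.trans hXP
    have hstep : ∀ {TL TR A B : Finset V}, IsMinSepFor G TL TR A B → TR ⊆ P →
        Z ⊆ ↑(A \ B) → A ∩ B = p.1 ∩ p.2 → ∃ P' Q', IsSeparation G P' Q' ∧
          SL ∪ SR ∪ (insert p F).sup (fun p => p.1 ∩ p.2) ⊆ P' ∧ Z ⊆ ↑(Q' \ P') ∧
          (P' ∩ Q').card ≤ (SL ∪ SR).card := by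
      intro TL TR A B hmin' hTR hZAB hAB
      obtain ⟨hsep, hZ', hcard'⟩ := hmin'.absorb hPQ hTR hZ hZAB
      refine ⟨_, _, hsep, fun x hx => ?_, hZ', hcard'.trans hcard⟩
      have := @hXP x
      rw [Finset.sup_insert, ← hAB] at hx
      simp only [Finset.sup_eq_union, Finset.mem_union, Finset.mem_inter] at hx this ⊢
      tauto
    rcases hside p (Finset.mem_insert_self p F) with hZp | hZp
    · exact hstep hmin (Finset.subset_union_right.trans hSP) hZp rfl
    · exact hstep hmin.symm (Finset.subset_union_left.trans hSP) hZp (Finset.inter_comm _ _)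

end Uncrossing

/-- If `F` is a finite family of `S`-stable separations and
`X = S ∪ ⋃_{(A,B) ∈ F} (A ∩ B)`, then every connected component `Z` of `G - X`
satisfies `|N_G(Z)| ≤ |S|`. -/
theorem stmt0 {V : Type} [Fintype V] [DecidableEq V] (G : SimpleGraph V)
    (S : Finset V) (F : Finset (Finset V × Finset V))
    (hF : ∀ p ∈ F, IsStable G S p.1 p.2)
    (X : Finset V) (hX : X = S ∪ F.sup fun p => p.1 ∩ p.2)
    (Z : Set V) (hZ : IsCompAway G (↑X) Z) :
    (extNbhd G Z).ncard ≤ S.card := by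
  subst hX
  have hside : ∀ p ∈ F, Z ⊆ ↑(p.1 \ p.2) ∨ Z ⊆ ↑(p.2 \ p.1) := fun p hp =>
    (hF p hp).isSeparation.subset_sdiff_or_subset_sdiff hZ.2.1.preconnected <|
      hZ.1.mono_right <| Finset.coe_subset.2 <|
        (Finset.le_sup (f := fun p => p.1 ∩ p.2) hp).trans Finset.subset_union_right
  obtain ⟨P, Q, hPQ, hXP, hZPQ, hcard⟩ := exists_separation_absorbing F hF hside
    (hZ.1.mono_right (Finset.coe_subset.2 Finset.subset_union_left))
  have hN : extNbhd G Z ⊆ ↑(P ∩ Q) := by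
    rw [Finset.coe_inter]
    exact Set.subset_inter (hZ.extNbhd_subset.trans (Finset.coe_subset.2 hXP))
      (hPQ.extNbhd_subset hZPQ)
  calc (extNbhd G Z).ncard ≤ (P ∩ Q).card :=
        (Set.ncard_le_ncard hN (Finset.finite_toSet _)).trans_eq (Set.ncard_coe_finset _)
    _ ≤ S.card := hcard
end

section
/- Let G be a finite connected graph of treewidth less than k, and let 𝓑 ⊆ 2^{V(G)} be a family of vertex sets that captures some rooted tree decomposition of G of width at most k' and adhesion width at most ℓ, where k ≤ ℓ ≤ k'. Then the family 𝓑^{≤(k+1)ℓ} captures some rooted tree decomposition of G of width at most (k+1)ℓ − 1. -/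
/-!
First split every node `t` of `D` into one node per component `C` of `G[α(t)]`, with bag
`(β(t) ∩ C) ∪ N(C)`. Bags only shrink, adhesions stay inside `σ(t)`, and afterwards every
adhesion set lies in the neighbourhood of a single component of `G - β(parent t)`.

Then place a copy of a decomposition `F` of width `< k` at every node `t` of the split
decomposition `E`. The bag at `(t, x)` keeps `β_F(x) ∩ β_E(t)` and `σ_E(t)`, and replaces each
vertex of `β_F(x)` outside `β_E(t)` by the neighbourhood of its component of `G - β_E(t)`; that
neighbourhood lies in one adhesion set, so it has at most `ℓ` vertices and the bag at most
`(k + 1)ℓ`. The copy of `t` hangs below a node of the parent copy whose `F`-bag meets the component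
whose neighbourhood contains `σ_E(t)`, which keeps the nodes containing a vertex connected.
-/

open Finset
open scoped Classical

namespace SimpleGraph

variable {V : Type} [Fintype V] (G : SimpleGraph V)

-- For `w ∉ U` this is `{w}`.
noncomputable def componentIn (U : Set V) (w : V) : Finset V :=
  univ.filter (Relation.ReflTransGen (fun a b => a ∈ U ∧ b ∈ U ∧ G.Adj a b) w)

noncomputable def extNbhdFinset (C : Finset V) : Finset V :=
  univ.filter (· ∈ extNbhd G ↑C)

variable {G} {U U' : Set V} {w : V}

lemma mem_extNbhdFinset {C : Finset V} {u : V} :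
    u ∈ G.extNbhdFinset C ↔ u ∉ C ∧ ∃ c ∈ C, G.Adj u c := by
  simp [extNbhdFinset, extNbhd]

lemma self_mem_componentIn : w ∈ G.componentIn U w := by
  simp [componentIn, Relation.ReflTransGen.refl]

lemma componentIn_induction {P : V → Prop} (hw : P w)
    (step : ∀ b c, b ∈ G.componentIn U w → b ∈ U → c ∈ U → G.Adj b c → P b → P c) :
    ∀ c ∈ G.componentIn U w, P c := by
  intro c hc
  simp only [componentIn, mem_filter, mem_univ, true_and] at hc
  induction hc with
  | refl => exact hw
  | tail hwb hbc ih =>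
    exact step _ _ (by simpa [componentIn] using hwb) hbc.1 hbc.2.1 hbc.2.2 ih

lemma mem_componentIn_of_adj {b c : V} (hb : b ∈ G.componentIn U w) (hbU : b ∈ U) (hc : c ∈ U)
    (hbc : G.Adj b c) : c ∈ G.componentIn U w := by
  simp only [componentIn, mem_filter, mem_univ, true_and] at hb ⊢
  exact hb.tail ⟨hbU, hc, hbc⟩

lemma mem_of_mem_componentIn (hw : w ∈ U) : ∀ c ∈ G.componentIn U w, c ∈ U :=
  componentIn_induction hw fun _ _ _ _ hc _ _ => hc

lemma componentIn_subset_componentIn (h : ∀ c ∈ G.componentIn U w, c ∈ U') :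
    G.componentIn U w ⊆ G.componentIn U' w := fun c hc =>
  componentIn_induction (P := (· ∈ G.componentIn U' w)) self_mem_componentIn
    (fun b c hb _ hcU hbc hb' =>
      mem_componentIn_of_adj hb' (h b hb) (h c (mem_componentIn_of_adj hb ‹_› hcU hbc)) hbc)
    c hc

lemma componentIn_mono (hw : w ∈ U) (hUU' : U ⊆ U') :
    G.componentIn U w ⊆ G.componentIn U' w :=
  componentIn_subset_componentIn fun c hc => hUU' (mem_of_mem_componentIn hw c hc)

lemma componentIn_eq_of_mem {c : V} (hc : c ∈ G.componentIn U w) :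
    G.componentIn U c = G.componentIn U w := by
  simp only [componentIn, mem_filter, mem_univ, true_and] at hc
  have : Std.Symm fun a b => a ∈ U ∧ b ∈ U ∧ G.Adj a b := ⟨fun _ _ h => ⟨h.2.1, h.1, h.2.2.symm⟩⟩
  ext u
  simp only [componentIn, mem_filter, mem_univ, true_and]
  exact ⟨hc.trans, (Std.Symm.symm _ _ hc).trans⟩

lemma componentIn_univ (hG : G.Connected) : G.componentIn Set.univ w = univ := by
  refine eq_univ_of_forall fun u => ?_
  simp only [componentIn, mem_filter, mem_univ, true_and, Set.mem_univ]
  simpa [reachable_iff_reflTransGen] using hG.preconnected w u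

lemma not_mem_of_mem_extNbhdFinset_componentIn {u : V} (hw : w ∈ U)
    (hu : u ∈ G.extNbhdFinset (G.componentIn U w)) : u ∉ U := by
  obtain ⟨hnot, c, hc, hadj⟩ := mem_extNbhdFinset.1 hu
  exact fun huU => hnot
    (mem_componentIn_of_adj hc (mem_of_mem_componentIn hw c hc) huU hadj.symm)

end SimpleGraph

abbrev parentGraph {ι : Type} (p : ι → ι) : SimpleGraph ι :=
  SimpleGraph.fromRel fun s t => p s = t

lemma parentGraph_reachable_of_eq {ι : Type} {p : ι → ι} {S : Set ι} {s q : ι} (hsq : p s = q)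
    (hs : s ∈ S) (hq : q ∈ S) : ((parentGraph p).induce S).Reachable ⟨s, hs⟩ ⟨q, hq⟩ := by
  subst hsq
  by_cases h : p s = s
  · rw [show (⟨p s, hq⟩ : S) = ⟨s, hs⟩ from Subtype.ext h]
  · exact SimpleGraph.Adj.reachable (by simpa using Ne.symm h)

namespace RTDOn

variable {V : Type} [Fintype V] [DecidableEq V] {G : SimpleGraph V}

section Tree

variable {W : Finset V} (D : RTDOn V G W)

def IsDesc (s t : D.ι) : Prop := ∃ n, D.parent^[n] s = t

variable {D} {r s t a : D.ι} {v : V}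

lemma isDesc_refl (t : D.ι) : D.IsDesc t t := ⟨0, rfl⟩

lemma isDesc_parent (t : D.ι) : D.IsDesc t (D.parent t) := ⟨1, rfl⟩

lemma isDesc_root (t : D.ι) : D.IsDesc t D.root := D.reaches_root t

lemma IsDesc.trans (h₁ : D.IsDesc r s) (h₂ : D.IsDesc s t) : D.IsDesc r t := by
  obtain ⟨n, rfl⟩ := h₁
  obtain ⟨m, rfl⟩ := h₂
  exact ⟨m + n, Function.iterate_add_apply _ _ _ _⟩

lemma eq_root_of_root_isDesc (h : D.IsDesc D.root t) : t = D.root := by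
  obtain ⟨n, rfl⟩ := h
  exact Function.iterate_fixed D.parent_root n

lemma eq_root_of_iterate_eq {m : ℕ} (hm : 0 < m) (h : D.parent^[m] t = t) : t = D.root := by
  obtain ⟨N, hN⟩ := D.reaches_root t
  have hp : Function.IsPeriodicPt D.parent (m * N) t :=
    (show Function.IsPeriodicPt D.parent m t from h).mul_const N
  calc t = D.parent^[m * N - N] (D.parent^[N] t) := by
        rw [← Function.iterate_add_apply, Nat.sub_add_cancel (Nat.le_mul_of_pos_left N hm)]
        exact hp.eq.symm
    _ = D.root := by rw [hN, Function.iterate_fixed D.parent_root]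

lemma IsDesc.antisymm (h₁ : D.IsDesc s t) (h₂ : D.IsDesc t s) : s = t := by
  obtain ⟨n, hn⟩ := h₁
  obtain ⟨m, hm⟩ := h₂
  rcases Nat.eq_zero_or_pos (m + n) with h | h
  · obtain ⟨rfl, rfl⟩ : m = 0 ∧ n = 0 := by omega
    exact hn
  · have hs := eq_root_of_iterate_eq h (by rw [Function.iterate_add_apply, hn, hm])
    subst hs
    exact (eq_root_of_root_isDesc ⟨n, hn⟩).symm

lemma parent_ne_self (h : t ≠ D.root) : D.parent t ≠ t := fun h' =>
  h (eq_root_of_iterate_eq Nat.one_pos h')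

lemma not_isDesc_parent (h : t ≠ D.root) : ¬ D.IsDesc (D.parent t) t := fun h' =>
  parent_ne_self h (h'.antisymm (isDesc_parent t))

lemma IsDesc.parent_of_ne (h : D.IsDesc s t) (hne : s ≠ t) : D.IsDesc (D.parent s) t := by
  obtain ⟨_ | n, hn⟩ := h
  · exact absurd hn hne
  · exact ⟨n, by rwa [← Function.iterate_succ_apply]⟩

lemma exists_child_of_isDesc (h : D.IsDesc r t) (hne : r ≠ t) :
    ∃ s, D.parent s = t ∧ s ≠ t ∧ D.IsDesc r s := by
  obtain ⟨n, hn⟩ := h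
  induction n generalizing r with
  | zero => exact absurd hn hne
  | succ n ih =>
    by_cases hr : D.parent r = t
    · exact ⟨r, hr, hne, isDesc_refl r⟩
    · obtain ⟨s, hs, hst, hrs⟩ := ih hr (by rwa [← Function.iterate_succ_apply])
      exact ⟨s, hs, hst, (isDesc_parent r).trans hrs⟩

lemma parent_induction {P : D.ι → Prop} (h : ∀ t, (t ≠ D.root → P (D.parent t)) → P t)
    (t : D.ι) : P t := by
  obtain ⟨n, hn⟩ := D.reaches_root t
  induction n generalizing t with
  | zero => exact h t fun ht => absurd hn ht
  | succ n ih => exact h t fun _ => ih _ (by rwa [← Function.iterate_succ_apply])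

lemma mem_of_reachable_of_isDesc {S : Set D.ι} {x y : S}
    (h : ((parentGraph D.parent).induce S).Reachable x y) (hx : D.IsDesc x s)
    (hy : ¬ D.IsDesc y s) : s ∈ S ∧ D.parent s ∈ S := by
  obtain ⟨p⟩ := h
  induction p with
  | nil => exact absurd hx hy
  | @cons a c b hac _ ih =>
    by_cases hc : D.IsDesc c s
    · exact ih hc hy
    · simp only [SimpleGraph.comap_adj, Function.Embedding.subtype_apply,
        SimpleGraph.fromRel_adj] at hac
      obtain ⟨_, hac | hca⟩ := hac
      · by_cases has : a.1 = s
        · exact ⟨has ▸ a.2, has ▸ hac ▸ c.2⟩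
        · exact absurd (hac ▸ hx.parent_of_ne has) hc
      · exact absurd ((hca ▸ isDesc_parent c.1).trans hx) hc

lemma sigmaBag_root : D.sigmaBag D.root = ∅ := if_pos rfl

lemma mem_sigmaBag (h : t ≠ D.root) : v ∈ D.sigmaBag t ↔ v ∈ D.bag t ∧ v ∈ D.bag (D.parent t) := by
  simp [sigmaBag, h]

lemma ne_root_of_mem_sigmaBag (h : v ∈ D.sigmaBag t) : t ≠ D.root := by
  rintro rfl
  simp [sigmaBag_root] at h

lemma mem_bag_of_mem_sigmaBag (h : v ∈ D.sigmaBag t) : v ∈ D.bag t :=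
  ((mem_sigmaBag (ne_root_of_mem_sigmaBag h)).1 h).1

lemma mem_bag_parent_of_mem_sigmaBag (h : v ∈ D.sigmaBag t) : v ∈ D.bag (D.parent t) :=
  ((mem_sigmaBag (ne_root_of_mem_sigmaBag h)).1 h).2

lemma card_sigmaBag_le {l : ℕ} (ha : D.adhesionLe l) (t : D.ι) : (D.sigmaBag t).card ≤ l := by
  by_cases h : t = D.root
  · simp [h, sigmaBag_root]
  · simpa [sigmaBag, h] using ha t h

lemma exists_mem_bag (hv : v ∈ W) : ∃ t, v ∈ D.bag t := by
  obtain ⟨⟨t, ht⟩⟩ := (D.bags_connected v hv).nonempty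
  exact ⟨t, ht⟩

-- The nodes containing `v` form a subtree, which `t — parent t` would otherwise disconnect.
lemma mem_sigmaBag_of_isDesc_of_not_isDesc (hr : v ∈ D.bag r) (hrt : D.IsDesc r t)
    (hs : v ∈ D.bag s) (hst : ¬ D.IsDesc s t) : v ∈ D.sigmaBag t := by
  have hreach := (D.bags_connected v (D.bag_subset r hr)).preconnected ⟨r, hr⟩ ⟨s, hs⟩
  obtain ⟨ht, hpt⟩ := mem_of_reachable_of_isDesc hreach hrt hst
  have htroot : t ≠ D.root := by
    rintro rfl
    exact hst (isDesc_root s)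
  exact (mem_sigmaBag htroot).2 ⟨ht, hpt⟩

def IsTop (D : RTDOn V G W) (v : V) (a : D.ι) : Prop :=
  v ∈ D.bag a ∧ ∀ s, v ∈ D.bag s → D.IsDesc s a

lemma exists_isTop (hv : v ∈ W) : ∃ a, D.IsTop v a := by
  obtain ⟨t, ht⟩ := exists_mem_bag (D := D) hv
  induction t using parent_induction with
  | h t ih =>
    by_cases hp : t ≠ D.root ∧ v ∈ D.bag (D.parent t)
    · exact ih hp.1 hp.2
    · refine ⟨t, ht, fun s hs => ?_⟩
      by_contra hst
      have hσ := mem_sigmaBag_of_isDesc_of_not_isDesc ht (isDesc_refl t) hs hst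
      exact hp ⟨ne_root_of_mem_sigmaBag hσ, mem_bag_parent_of_mem_sigmaBag hσ⟩

lemma IsTop.not_mem_sigmaBag (ha : D.IsTop v a) : v ∉ D.sigmaBag a := fun h =>
  not_isDesc_parent (ne_root_of_mem_sigmaBag h) (ha.2 _ (mem_bag_parent_of_mem_sigmaBag h))

lemma IsTop.mem_sigmaBag (ha : D.IsTop v a) (ht : v ∈ D.bag t) (hta : t ≠ a) :
    v ∈ D.sigmaBag t :=
  mem_sigmaBag_of_isDesc_of_not_isDesc ht (isDesc_refl t) ha.1
    fun hat => hta ((ha.2 t ht).antisymm hat)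

lemma IsTop.eq_of_eq_root (ha : D.IsTop v a) (ht : v ∈ D.bag t) (hroot : t = D.root) :
    t = a :=
  hroot ▸ (eq_root_of_root_isDesc (hroot ▸ ha.2 t ht)).symm

lemma isDesc_iff_of_reachable {S : Set D.ι} {x y : S}
    (h : ((parentGraph D.parent).induce S).Reachable x y) (hs : s ∉ S ∨ D.parent s ∉ S) :
    D.IsDesc x s ↔ D.IsDesc y s := by
  have key : ∀ {x y : S}, ((parentGraph D.parent).induce S).Reachable x y →
      D.IsDesc x s → D.IsDesc y s := fun h hx => by
    by_contra hy
    obtain ⟨h₁, h₂⟩ := mem_of_reachable_of_isDesc h hx hy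
    exact hs.elim (· h₁) (· h₂)
  exact ⟨key h, key h.symm⟩

lemma reachable_of_mem_bag {S : Set D.ι} {c : V}
    (hS : ∀ y, c ∈ D.bag y → y ∈ S) {x y : D.ι} (hx : c ∈ D.bag x) (hy : c ∈ D.bag y) :
    ((parentGraph D.parent).induce S).Reachable ⟨x, hS x hx⟩ ⟨y, hS y hy⟩ :=
  ((D.bags_connected c (D.bag_subset x hx)).preconnected ⟨x, hx⟩ ⟨y, hy⟩).map
    (SimpleGraph.induceHomOfLE _ hS).toHom

end Tree

variable {D : RTD V G}

lemma reachable_of_mem_componentIn {S : Set D.ι} {U : Set V} {w : V}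
    (hS : ∀ c ∈ G.componentIn U w, ∀ y, c ∈ D.bag y → y ∈ S) {c c' : V} {x y : D.ι}
    (hc : c ∈ G.componentIn U w) (hc' : c' ∈ G.componentIn U w) (hx : c ∈ D.bag x)
    (hy : c' ∈ D.bag y) :
    ((parentGraph D.parent).induce S).Reachable ⟨x, hS c hc x hx⟩ ⟨y, hS c' hc' y hy⟩ := by
  obtain ⟨x₀, hx₀⟩ := D.exists_mem_bag (mem_univ w)
  have hw := SimpleGraph.self_mem_componentIn (G := G) (U := U) (w := w)
  have key : ∀ c ∈ G.componentIn U w, ∀ (hc : c ∈ G.componentIn U w) x (hx : c ∈ D.bag x),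
      ((parentGraph D.parent).induce S).Reachable ⟨x, hS c hc x hx⟩ ⟨x₀, hS w hw x₀ hx₀⟩ := by
    refine SimpleGraph.componentIn_induction (fun _ x hx => reachable_of_mem_bag _ hx hx₀) ?_
    intro b c hb _ _ hbc ih hc x hx
    obtain ⟨e, hbe, hce⟩ := D.edge_in_bag b (mem_univ b) c (mem_univ c) hbc
    exact (reachable_of_mem_bag (hS c hc) hx hce).trans (ih hb e hbe)
  exact (key c hc hc x hx).trans (key c' hc' hc' y hy).symm

-- A component of `G - β(t)` attaches to `β(t)` through a single adhesion set.
lemma card_extNbhdFinset_componentIn_le {l : ℕ} (ha : D.adhesionLe l) (t : D.ι)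
    {w : V} (hw : w ∉ D.bag t) :
    (G.extNbhdFinset (G.componentIn (↑(D.bag t))ᶜ w)).card ≤ l := by
  have hw' : w ∈ (↑(D.bag t) : Set V)ᶜ := by simpa using hw
  set Q := G.componentIn (↑(D.bag t))ᶜ w
  set S : Set D.ι := {y | ∃ c ∈ Q, c ∈ D.bag y}
  have hS : ∀ c ∈ Q, ∀ y, c ∈ D.bag y → y ∈ S := fun c hc y hy => ⟨c, hc, hy⟩
  have htS : t ∉ S := fun ⟨c, hc, hct⟩ =>
    SimpleGraph.mem_of_mem_componentIn hw' c hc hct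
  obtain ⟨x₀, hx₀⟩ := D.exists_mem_bag (mem_univ w)
  have hwQ : w ∈ Q := SimpleGraph.self_mem_componentIn
  suffices ∃ s, (s ∉ S ∨ D.parent s ∉ S) ∧ (D.IsDesc x₀ s ↔ ¬ D.IsDesc t s) by
    obtain ⟨s, hs, hside⟩ := this
    refine (card_le_card fun u hu => ?_).trans (card_sigmaBag_le ha s)
    have hut : u ∈ D.bag t := by
      have h := SimpleGraph.not_mem_of_mem_extNbhdFinset_componentIn hw' hu
      rwa [Set.notMem_compl_iff, Finset.mem_coe] at h
    obtain ⟨-, c, hc, huc⟩ := SimpleGraph.mem_extNbhdFinset.1 hu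
    obtain ⟨e, hue, hce⟩ := D.edge_in_bag u (mem_univ u) c (mem_univ c) huc
    have he := isDesc_iff_of_reachable (reachable_of_mem_componentIn hS hc hwQ hce hx₀) hs
    by_cases hes : D.IsDesc e s
    · exact mem_sigmaBag_of_isDesc_of_not_isDesc hue hes hut (hside.1 (he.1 hes))
    · exact mem_sigmaBag_of_isDesc_of_not_isDesc hut
        (not_not.1 (mt hside.2 (mt he.2 hes))) hue hes
  by_cases hx₀t : D.IsDesc x₀ t
  · obtain ⟨s, hst, hs, hx₀s⟩ := exists_child_of_isDesc hx₀t (by rintro rfl; exact hw hx₀)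
    refine ⟨s, Or.inr (hst ▸ htS), iff_of_true hx₀s fun hts => hs ?_⟩
    exact hst ▸ (isDesc_parent s).antisymm (hst ▸ hts)
  · exact ⟨t, Or.inl htS, iff_of_false hx₀t (not_not.2 (isDesc_refl t))⟩

section Split

variable {t : D.ι} {u v : V}

lemma bag_subset_gammaSet (hv : v ∈ D.bag t) : v ∈ D.gammaSet t := ⟨t, isDesc_refl t, hv⟩

lemma mem_sigmaBag_of_mem_gammaSet (ht : t ≠ D.root) (hv : v ∈ D.gammaSet t)
    (hvp : v ∈ D.bag (D.parent t)) : v ∈ D.sigmaBag t := by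
  obtain ⟨r, hrt, hvr⟩ := hv
  exact mem_sigmaBag_of_isDesc_of_not_isDesc hvr hrt hvp (not_isDesc_parent ht)

lemma mem_gammaSet_of_adj (hu : u ∈ D.alphaSet t) (huv : G.Adj u v) : v ∈ D.gammaSet t := by
  obtain ⟨⟨r, hrt, hur⟩, huσ⟩ := hu
  obtain ⟨e, hue, hve⟩ := D.edge_in_bag u (mem_univ u) v (mem_univ v) huv
  by_cases het : D.IsDesc e t
  · exact ⟨e, het, hve⟩
  · exact absurd (mem_sigmaBag_of_isDesc_of_not_isDesc hur hrt hue het) huσ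

lemma alphaSet_subset_parent (ht : t ≠ D.root) : D.alphaSet t ⊆ D.alphaSet (D.parent t) :=
  fun _ ⟨⟨r, hrt, hvr⟩, hσ⟩ => ⟨⟨r, IsDesc.trans hrt (isDesc_parent t), hvr⟩,
    fun hσp => hσ (mem_sigmaBag_of_mem_gammaSet ht ⟨r, hrt, hvr⟩ (mem_bag_of_mem_sigmaBag hσp))⟩

lemma alphaSet_root : D.alphaSet D.root = Set.univ := by
  refine Set.eq_univ_of_forall fun v => ⟨?_, by simp [sigmaBag_root]⟩
  obtain ⟨r, hr⟩ := D.exists_mem_bag (mem_univ v)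
  exact ⟨r, isDesc_root r, hr⟩

def SplitNode (D : RTD V G) : Type :=
  {p : D.ι × Finset V // ∃ w ∈ D.alphaSet p.1, p.2 = G.componentIn (D.alphaSet p.1) w}

noncomputable instance : Fintype D.SplitNode := by unfold SplitNode; infer_instance

noncomputable instance : DecidableEq D.SplitNode := by unfold SplitNode; infer_instance

namespace SplitNode

variable (j : D.SplitNode)

def node : D.ι := j.1.1

def comp : Finset V := j.1.2

noncomputable def basept : V := j.2.choose

noncomputable def ofMem (t : D.ι) (w : V) (hw : w ∈ D.alphaSet t) : D.SplitNode :=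
  ⟨(t, G.componentIn (D.alphaSet t) w), w, hw, rfl⟩

lemma basept_mem : j.basept ∈ D.alphaSet j.node := j.2.choose_spec.1

lemma comp_eq : j.comp = G.componentIn (D.alphaSet j.node) j.basept := j.2.choose_spec.2

lemma basept_mem_comp : j.basept ∈ j.comp := by
  rw [comp_eq]
  exact SimpleGraph.self_mem_componentIn

variable {j}

lemma mem_alphaSet_of_mem_comp (hc : v ∈ j.comp) : v ∈ D.alphaSet j.node := by
  rw [comp_eq] at hc
  exact SimpleGraph.mem_of_mem_componentIn j.basept_mem v hc

lemma ext_of_mem {j' : D.SplitNode} (h : j.node = j'.node) (hv : v ∈ j.comp) (hv' : v ∈ j'.comp) :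
    j = j' := by
  have hcomp : ∀ {i : D.SplitNode}, v ∈ i.comp → i.comp = G.componentIn (D.alphaSet i.node) v :=
    fun {i} hi => by rw [comp_eq] at hi ⊢; exact (SimpleGraph.componentIn_eq_of_mem hi).symm
  have : j.comp = j'.comp := by rw [hcomp hv, hcomp hv', h]
  exact Subtype.ext (Prod.ext h this)

-- A neighbour in `α(t)` would belong to the component itself.
lemma mem_sigmaBag_of_mem_extNbhdFinset (hu : u ∈ G.extNbhdFinset j.comp) :
    u ∈ D.sigmaBag j.node := by
  obtain ⟨huC, c, hc, huc⟩ := SimpleGraph.mem_extNbhdFinset.1 hu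
  by_contra huσ
  have hcα := mem_alphaSet_of_mem_comp hc
  refine huC ?_
  rw [comp_eq] at hc ⊢
  exact SimpleGraph.mem_componentIn_of_adj hc hcα ⟨mem_gammaSet_of_adj hcα huc.symm, huσ⟩
    huc.symm

end SplitNode

open SplitNode

variable (D) in
noncomputable def splitParent (j : D.SplitNode) : D.SplitNode :=
  if h : j.node = D.root then j
  else ofMem (D.parent j.node) j.basept (alphaSet_subset_parent h j.basept_mem)

variable (D) in
noncomputable def splitBag (j : D.SplitNode) : Finset V :=
  (D.bag j.node ∩ j.comp) ∪ G.extNbhdFinset j.comp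

variable (D) in
noncomputable def splitRoot (hG : G.Connected) : D.SplitNode :=
  have : Nonempty V := hG.nonempty
  ⟨(D.root, univ), Classical.arbitrary V, by simp [alphaSet_root],
    by rw [alphaSet_root, SimpleGraph.componentIn_univ hG]⟩

variable {j : D.SplitNode}

lemma splitParent_of_ne_root (h : j.node ≠ D.root) :
    D.splitParent j = ofMem (D.parent j.node) j.basept (alphaSet_subset_parent h j.basept_mem) :=
  dif_neg h

lemma node_splitParent (j : D.SplitNode) : (D.splitParent j).node = D.parent j.node := by
  by_cases h : j.node = D.root
  · rw [splitParent, dif_pos h, h, D.parent_root]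
  · rw [splitParent_of_ne_root h]
    rfl

lemma comp_subset_comp_splitParent (h : j.node ≠ D.root) : j.comp ⊆ (D.splitParent j).comp := by
  rw [splitParent_of_ne_root h, comp_eq]
  exact SimpleGraph.componentIn_mono j.basept_mem (alphaSet_subset_parent h)

lemma eq_splitRoot (hG : G.Connected) (h : j.node = D.root) : j = D.splitRoot hG :=
  ext_of_mem h j.basept_mem_comp (mem_univ _)

lemma splitBag_subset_bag (j : D.SplitNode) : D.splitBag j ⊆ D.bag j.node := by
  refine union_subset inter_subset_left fun u hu => ?_
  exact mem_bag_of_mem_sigmaBag (mem_sigmaBag_of_mem_extNbhdFinset hu)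

lemma mem_splitBag_of_adj (hv : v ∈ D.bag j.node) {c : V} (hc : c ∈ j.comp) (hvc : G.Adj v c) :
    v ∈ D.splitBag j := by
  by_cases hvC : v ∈ j.comp
  · exact mem_union_left _ (mem_inter.2 ⟨hv, hvC⟩)
  · exact mem_union_right _ (SimpleGraph.mem_extNbhdFinset.2 ⟨hvC, c, hc, hvc⟩)

lemma mem_splitBag_splitParent (h : j.node ≠ D.root) (hv : v ∈ D.splitBag j)
    (hvp : v ∈ D.bag (D.parent j.node)) : v ∈ D.splitBag (D.splitParent j) := by
  rw [← node_splitParent] at hvp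
  rcases mem_union.1 hv with hv | hv
  · exact mem_union_left _ (mem_inter.2 ⟨hvp, comp_subset_comp_splitParent h (mem_inter.1 hv).2⟩)
  · obtain ⟨-, c, hc, hvc⟩ := SimpleGraph.mem_extNbhdFinset.1 hv
    exact mem_splitBag_of_adj hvp (comp_subset_comp_splitParent h hc) hvc

lemma not_mem_splitBag_splitParent (h : j.node ≠ D.root) {c : V} (hc : c ∈ j.comp) :
    c ∉ D.splitBag (D.splitParent j) := by
  intro hcp
  rcases mem_union.1 hcp with hcp | hcp
  · have hcα := mem_alphaSet_of_mem_comp hc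
    rw [node_splitParent] at hcp
    exact hcα.2 (mem_sigmaBag_of_mem_gammaSet h hcα.1 (mem_inter.1 hcp).1)
  · exact (SimpleGraph.mem_extNbhdFinset.1 hcp).1 (comp_subset_comp_splitParent h hc)

lemma splitBag_inter_splitParent_subset (h : j.node ≠ D.root) :
    D.splitBag j ∩ D.splitBag (D.splitParent j) ⊆ G.extNbhdFinset j.comp := by
  intro u hu
  obtain ⟨hu, hup⟩ := mem_inter.1 hu
  rcases mem_union.1 hu with hu | hu
  · exact absurd hup (not_mem_splitBag_splitParent h (mem_inter.1 hu).2)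
  · exact hu

lemma splitParent_reaches_root (hG : G.Connected) (j : D.SplitNode) :
    ∃ n, (D.splitParent)^[n] j = D.splitRoot hG := by
  obtain ⟨n, hn⟩ := D.reaches_root j.node
  have hsemi : Function.Semiconj node D.splitParent D.parent := node_splitParent
  exact ⟨n, eq_splitRoot hG (by rw [hsemi.iterate_right n j, hn])⟩

lemma splitBag_connected (v : V) :
    ((parentGraph D.splitParent).induce {j | v ∈ D.splitBag j}).Connected := by
  obtain ⟨a, ha⟩ := D.exists_isTop (mem_univ v)
  let jA := ofMem a v ⟨bag_subset_gammaSet ha.1, ha.not_mem_sigmaBag⟩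
  have hjA : v ∈ D.splitBag jA :=
    mem_union_left _ (mem_inter.2 ⟨ha.1, SimpleGraph.self_mem_componentIn⟩)
  rw [SimpleGraph.connected_iff_exists_forall_reachable]
  refine ⟨⟨jA, hjA⟩, fun ⟨j, hj⟩ => SimpleGraph.Reachable.symm ?_⟩
  suffices ∀ t j (hj : v ∈ D.splitBag j), j.node = t →
      ((parentGraph D.splitParent).induce {j | v ∈ D.splitBag j}).Reachable ⟨j, hj⟩ ⟨jA, hjA⟩ from
    this _ j hj rfl
  intro t
  induction t using parent_induction with
  | h t ih =>
    rintro j hj rfl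
    have hvt : v ∈ D.bag j.node := splitBag_subset_bag j hj
    by_cases hta : j.node = a
    · have hvC : v ∈ j.comp := by
        rcases mem_union.1 hj with hv | hv
        · exact (mem_inter.1 hv).2
        · exact absurd (hta ▸ mem_sigmaBag_of_mem_extNbhdFinset hv) ha.not_mem_sigmaBag
      obtain rfl : j = jA := ext_of_mem hta hvC SimpleGraph.self_mem_componentIn
      rfl
    · have hσ := ha.mem_sigmaBag hvt hta
      have hroot := ne_root_of_mem_sigmaBag hσ
      have hp := mem_splitBag_splitParent hroot hj (mem_bag_parent_of_mem_sigmaBag hσ)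
      exact (parentGraph_reachable_of_eq (S := {j | v ∈ D.splitBag j}) rfl hj hp).trans
        (ih hroot _ hp (node_splitParent j))

lemma exists_splitBag_of_adj {u v : V} (huv : G.Adj u v) :
    ∃ j, u ∈ D.splitBag j ∧ v ∈ D.splitBag j := by
  obtain ⟨t, hut, hvt⟩ := D.edge_in_bag u (mem_univ u) v (mem_univ v) huv
  induction t using parent_induction with
  | h t ih =>
    have key : ∀ {x y : V}, x ∈ D.bag t → y ∈ D.bag t → x ∉ D.sigmaBag t → G.Adj x y →
        ∃ j, x ∈ D.splitBag j ∧ y ∈ D.splitBag j := fun hx hy hxσ hxy =>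
      ⟨ofMem t _ ⟨bag_subset_gammaSet hx, hxσ⟩,
        mem_union_left _ (mem_inter.2 ⟨hx, SimpleGraph.self_mem_componentIn⟩),
        mem_splitBag_of_adj hy SimpleGraph.self_mem_componentIn hxy.symm⟩
    by_cases huσ : u ∈ D.sigmaBag t
    · by_cases hvσ : v ∈ D.sigmaBag t
      · exact ih (ne_root_of_mem_sigmaBag huσ) (mem_bag_parent_of_mem_sigmaBag huσ)
          (mem_bag_parent_of_mem_sigmaBag hvσ)
      · obtain ⟨j, hj⟩ := key hvt hut hvσ huv.symm
        exact ⟨j, hj.symm⟩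
    · exact key hut hvt huσ huv

variable (D) in
noncomputable def splitByComponents (hG : G.Connected) : RTD V G where
  ι := D.SplitNode
  instFintype := inferInstance
  instDecEq := inferInstance
  root := D.splitRoot hG
  parent := D.splitParent
  parent_root := dif_pos rfl
  reaches_root := splitParent_reaches_root hG
  bag := D.splitBag
  bag_subset _ := subset_univ _
  bags_connected v _ := splitBag_connected v
  edge_in_bag _ _ _ _ := exists_splitBag_of_adj

lemma splitByComponents_adhesionLe (hG : G.Connected) {l : ℕ} (ha : D.adhesionLe l) :
    (D.splitByComponents hG).adhesionLe l := by
  intro j hj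
  have h : j.node ≠ D.root := fun h => hj (eq_splitRoot hG h)
  refine (card_le_card ?_).trans (card_sigmaBag_le ha j.node)
  exact (splitBag_inter_splitParent_subset h).trans fun u hu =>
    mem_sigmaBag_of_mem_extNbhdFinset hu

def AdhesionsAttached (E : RTD V G) : Prop :=
  ∀ t, t ≠ E.root → ∃ w, w ∉ E.bag (E.parent t) ∧
    E.sigmaBag t ⊆ G.extNbhdFinset (G.componentIn (↑(E.bag (E.parent t)))ᶜ w)

lemma splitByComponents_adhesionsAttached (hG : G.Connected) :
    (D.splitByComponents hG).AdhesionsAttached := by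
  rintro (j : D.SplitNode) hj
  have h : j.node ≠ D.root := fun h => hj (eq_splitRoot hG h)
  have hCX : ∀ c ∈ j.comp, c ∈ (↑(D.splitBag (D.splitParent j)) : Set V)ᶜ :=
    fun c hc => not_mem_splitBag_splitParent h hc
  have hbp := basept_mem_comp j
  have hCQ : j.comp ⊆ G.componentIn (↑(D.splitBag (D.splitParent j)))ᶜ j.basept := by
    rw [comp_eq]
    exact SimpleGraph.componentIn_subset_componentIn (by rw [← comp_eq]; exact hCX)
  refine ⟨j.basept, hCX _ hbp, fun u hu => ?_⟩
  simp only [sigmaBag, if_neg hj] at hu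
  obtain ⟨-, c, hc, huc⟩ :=
    SimpleGraph.mem_extNbhdFinset.1 (splitBag_inter_splitParent_subset h hu)
  refine SimpleGraph.mem_extNbhdFinset.2 ⟨fun huQ => ?_, c, hCQ hc, huc⟩
  exact SimpleGraph.mem_of_mem_componentIn (hCX _ hbp) u huQ (mem_inter.1 hu).2

end Split

section Product

variable (E F : RTD V G)

noncomputable def prodBag (p : E.ι × F.ι) : Finset V :=
  (F.bag p.2 ∩ E.bag p.1) ∪ E.sigmaBag p.1 ∪
    (F.bag p.2 \ E.bag p.1).biUnion fun w => G.extNbhdFinset (G.componentIn (↑(E.bag p.1))ᶜ w)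

noncomputable def prodParent (g : E.ι → F.ι) (p : E.ι × F.ι) : E.ι × F.ι :=
  if p.2 = F.root then (E.parent p.1, g p.1) else (p.1, F.parent p.2)

variable {E F} {g : E.ι → F.ι} {t : E.ι} {x : F.ι} {v : V}

lemma prodParent_of_eq_root : E.prodParent F g (t, F.root) = (E.parent t, g t) := if_pos rfl

lemma prodParent_of_ne_root (hx : x ≠ F.root) : E.prodParent F g (t, x) = (t, F.parent x) :=
  if_neg hx

lemma prodBag_subset_bag (p : E.ι × F.ι) : E.prodBag F p ⊆ E.bag p.1 := by
  refine union_subset (union_subset inter_subset_right fun u hu => mem_bag_of_mem_sigmaBag hu) ?_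
  refine biUnion_subset.2 fun w hw u hu => ?_
  have hw' : w ∈ (↑(E.bag p.1) : Set V)ᶜ := by simpa using (mem_sdiff.1 hw).2
  simpa using SimpleGraph.not_mem_of_mem_extNbhdFinset_componentIn hw' hu

lemma mem_prodBag_of_mem (hvx : v ∈ F.bag x) (hvt : v ∈ E.bag t) : v ∈ E.prodBag F (t, x) :=
  mem_union_left _ (mem_union_left _ (mem_inter.2 ⟨hvx, hvt⟩))

lemma sigmaBag_subset_prodBag : E.sigmaBag t ⊆ E.prodBag F (t, x) :=
  fun _ hv => mem_union_left _ (mem_union_right _ hv)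

lemma extNbhdFinset_subset_prodBag {w : V} (hwx : w ∈ F.bag x) (hwt : w ∉ E.bag t) :
    G.extNbhdFinset (G.componentIn (↑(E.bag t))ᶜ w) ⊆ E.prodBag F (t, x) :=
  fun _ hu => mem_union_right _ (mem_biUnion.2 ⟨w, mem_sdiff.2 ⟨hwx, hwt⟩, hu⟩)

lemma card_prodBag_le {k l : ℕ} (hF : ∀ x, (F.bag x).card ≤ k) (ha : E.adhesionLe l)
    (hl : 1 ≤ l) (p : E.ι × F.ι) : (E.prodBag F p).card ≤ (k + 1) * l := by
  have hnbhd : ((F.bag p.2 \ E.bag p.1).biUnion fun w =>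
      G.extNbhdFinset (G.componentIn (↑(E.bag p.1))ᶜ w)).card ≤ (F.bag p.2 \ E.bag p.1).card * l :=
    card_biUnion_le_card_mul _ _ _ fun w hw =>
      card_extNbhdFinset_componentIn_le ha p.1 (mem_sdiff.1 hw).2
  have hsplit := card_inter_add_card_sdiff (F.bag p.2) (E.bag p.1)
  calc (E.prodBag F p).card
      ≤ (F.bag p.2 ∩ E.bag p.1).card + (E.sigmaBag p.1).card +
          (F.bag p.2 \ E.bag p.1).card * l :=
        (card_union_le _ _).trans (add_le_add (card_union_le _ _) hnbhd)
    _ ≤ (F.bag p.2 ∩ E.bag p.1).card * l + l + (F.bag p.2 \ E.bag p.1).card * l := by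
        gcongr
        · exact Nat.le_mul_of_pos_right _ hl
        · exact card_sigmaBag_le ha _
    _ = ((F.bag p.2 ∩ E.bag p.1).card + (F.bag p.2 \ E.bag p.1).card + 1) * l := by ring
    _ ≤ (k + 1) * l := by
        gcongr
        rw [hsplit]
        exact hF _

variable (g) in
def copyHom (t : E.ι) : parentGraph F.parent →g parentGraph (E.prodParent F g) where
  toFun x := (t, x)
  map_rel' {x y} h := by
    simp only [SimpleGraph.fromRel_adj, ne_eq, Prod.mk.injEq, true_and] at h ⊢
    refine ⟨h.1, h.2.imp (fun hxy => ?_) (fun hyx => ?_)⟩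
    · have hx : x ≠ F.root := fun hx => h.1 (by rw [← hxy, hx, F.parent_root])
      rw [prodParent_of_ne_root hx, hxy]
    · have hy : y ≠ F.root := fun hy => h.1 (by rw [← hyx, hy, F.parent_root])
      rw [prodParent_of_ne_root hy, hyx]

lemma reachable_of_reachable_copy {S : Set (E.ι × F.ι)} {y : F.ι} (hx : (t, x) ∈ S)
    (hy : (t, y) ∈ S)
    (h : ((parentGraph F.parent).induce {y | (t, y) ∈ S}).Reachable ⟨x, hx⟩ ⟨y, hy⟩) :
    ((parentGraph (E.prodParent F g)).induce S).Reachable ⟨(t, x), hx⟩ ⟨(t, y), hy⟩ :=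
  h.map (SimpleGraph.induceHom (copyHom g t) fun _ h => h)

lemma prodParent_reaches_root (p : E.ι × F.ι) :
    ∃ n, (E.prodParent F g)^[n] p = (E.root, F.root) := by
  have hcopy : ∀ t x, ∃ n, (E.prodParent F g)^[n] (t, x) = (t, F.root) := by
    intro t x
    induction x using parent_induction with
    | h x ih =>
      by_cases hx : x = F.root
      · exact ⟨0, by rw [hx]; rfl⟩
      · obtain ⟨n, hn⟩ := ih hx
        exact ⟨n + 1, by rw [Function.iterate_succ_apply, prodParent_of_ne_root hx, hn]⟩
  have hbase : ∀ t, ∃ n, (E.prodParent F g)^[n] (t, F.root) = (E.root, F.root) := by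
    intro t
    induction t using parent_induction with
    | h t ih =>
      by_cases ht : t = E.root
      · exact ⟨0, by rw [ht]; rfl⟩
      · obtain ⟨m, hm⟩ := hcopy (E.parent t) (g t)
        obtain ⟨n, hn⟩ := ih ht
        exact ⟨n + m + 1, by
          rw [Function.iterate_succ_apply, prodParent_of_eq_root, Function.iterate_add_apply, hm, hn]⟩
  obtain ⟨m, hm⟩ := hcopy p.1 p.2
  obtain ⟨n, hn⟩ := hbase p.1
  exact ⟨n + m, by rw [Function.iterate_add_apply, hm, hn]⟩

/-- Within the copy of the top node `a` of `v`, a bag contains `v` either because it meets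
the subtree of `v` in `F` or a component of `G - β_E(a)` next to `v`; both are subtrees of `F`
meeting the subtree of `v`. -/
lemma prodBag_reachable_of_isTop {a : E.ι} {v : V} (ha : E.IsTop v a) {x x₀ : F.ι}
    (hx : v ∈ E.prodBag F (a, x)) (hx₀ : v ∈ F.bag x₀) :
    ((parentGraph (E.prodParent F g)).induce {p | v ∈ E.prodBag F p}).Reachable
      ⟨(a, x), hx⟩ ⟨(a, x₀), mem_prodBag_of_mem hx₀ ha.1⟩ := by
  have hvS : ∀ y, v ∈ F.bag y → v ∈ E.prodBag F (a, y) := fun y hy => mem_prodBag_of_mem hy ha.1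
  apply reachable_of_reachable_copy
  rcases mem_union.1 hx with hx | hx
  · rcases mem_union.1 hx with hx | hx
    · exact reachable_of_mem_bag hvS (mem_inter.1 hx).1 hx₀
    · exact absurd hx ha.not_mem_sigmaBag
  · obtain ⟨w, hw, hvN⟩ := mem_biUnion.1 hx
    obtain ⟨hwx, hwa⟩ := mem_sdiff.1 hw
    have hwa' : w ∈ (↑(E.bag a) : Set V)ᶜ := by simpa using hwa
    have hQS : ∀ c ∈ G.componentIn (↑(E.bag a))ᶜ w, ∀ y, c ∈ F.bag y →
        v ∈ E.prodBag F (a, y) := fun c hc y hy =>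
      extNbhdFinset_subset_prodBag hy (SimpleGraph.mem_of_mem_componentIn hwa' c hc)
        (by rwa [SimpleGraph.componentIn_eq_of_mem hc])
    obtain ⟨-, u, hu, hvu⟩ := SimpleGraph.mem_extNbhdFinset.1 hvN
    obtain ⟨y, hvy, huy⟩ := F.edge_in_bag v (mem_univ v) u (mem_univ u) hvu
    exact (reachable_of_mem_componentIn hQS SimpleGraph.self_mem_componentIn hu hwx huy).trans
      (reachable_of_mem_bag hvS hvy hx₀)

/-- Below the top node of `v`, a copy containing `v` contains it in the adhesion, hence in every
bag of the copy, and its root is glued to a bag of the parent copy containing `v`. -/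
lemma prodBag_connected (hg : ∀ t, t ≠ E.root → E.sigmaBag t ⊆ E.prodBag F (E.parent t, g t))
    (v : V) : ((parentGraph (E.prodParent F g)).induce {p | v ∈ E.prodBag F p}).Connected := by
  set S := {p | v ∈ E.prodBag F p}
  obtain ⟨a, ha⟩ := E.exists_isTop (mem_univ v)
  obtain ⟨x₀, hx₀⟩ := F.exists_mem_bag (mem_univ v)
  have h₀ : (a, x₀) ∈ S := mem_prodBag_of_mem hx₀ ha.1
  rw [SimpleGraph.connected_iff_exists_forall_reachable]
  refine ⟨⟨(a, x₀), h₀⟩, fun ⟨p, hp⟩ => SimpleGraph.Reachable.symm ?_⟩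
  suffices ∀ t x (hx : (t, x) ∈ S),
      ((parentGraph (E.prodParent F g)).induce S).Reachable ⟨(t, x), hx⟩ ⟨(a, x₀), h₀⟩ from
    this p.1 p.2 hp
  intro t
  induction t using parent_induction with
  | h t ih =>
    intro x hx
    by_cases hta : t = a
    · subst hta
      exact prodBag_reachable_of_isTop ha hx hx₀
    · have hσ := ha.mem_sigmaBag (prodBag_subset_bag _ hx) hta
      have ht := ne_root_of_mem_sigmaBag hσ
      have hall : ∀ y, (t, y) ∈ S := fun y => sigmaBag_subset_prodBag hσ
      have hup : ∀ y, ((parentGraph (E.prodParent F g)).induce S).Reachable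
          ⟨(t, y), hall y⟩ ⟨(t, F.root), hall _⟩ := by
        intro y
        induction y using parent_induction with
        | h y ihy =>
          by_cases hy : y = F.root
          · subst hy
            rfl
          · exact (parentGraph_reachable_of_eq (prodParent_of_ne_root hy) _ (hall _)).trans
              (ihy hy)
      have hpar : (E.parent t, g t) ∈ S := hg t ht hσ
      exact (hup x).trans ((parentGraph_reachable_of_eq prodParent_of_eq_root _ hpar).trans
        (ih ht _ hpar))

lemma exists_prodBag_of_adj {u v : V} (huv : G.Adj u v) :
    ∃ p, u ∈ E.prodBag F p ∧ v ∈ E.prodBag F p := by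
  obtain ⟨t, hut, hvt⟩ := E.edge_in_bag u (mem_univ u) v (mem_univ v) huv
  obtain ⟨x, hux, hvx⟩ := F.edge_in_bag u (mem_univ u) v (mem_univ v) huv
  exact ⟨(t, x), mem_prodBag_of_mem hux hut, mem_prodBag_of_mem hvx hvt⟩

variable (E F g) in
noncomputable def prodDecomp (hg₀ : g E.root = F.root)
    (hg : ∀ t, t ≠ E.root → E.sigmaBag t ⊆ E.prodBag F (E.parent t, g t)) : RTD V G where
  ι := E.ι × F.ι
  instFintype := inferInstance
  instDecEq := inferInstance
  root := (E.root, F.root)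
  parent := E.prodParent F g
  parent_root := by rw [prodParent_of_eq_root, E.parent_root, hg₀]
  reaches_root := prodParent_reaches_root
  bag := E.prodBag F
  bag_subset _ := subset_univ _
  bags_connected v _ := prodBag_connected hg v
  edge_in_bag _ _ _ _ := exists_prodBag_of_adj

variable (E F) in
lemma exists_prodParent_gluing (hE : E.AdhesionsAttached) :
    ∃ g : E.ι → F.ι, g E.root = F.root ∧
      ∀ t, t ≠ E.root → E.sigmaBag t ⊆ E.prodBag F (E.parent t, g t) := by
  have : ∀ t, ∃ y, (t = E.root → y = F.root) ∧
      (t ≠ E.root → E.sigmaBag t ⊆ E.prodBag F (E.parent t, y)) := by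
    intro t
    by_cases ht : t = E.root
    · exact ⟨F.root, fun _ => rfl, fun h => absurd ht h⟩
    · obtain ⟨w, hw, hσ⟩ := hE t ht
      obtain ⟨y, hy⟩ := F.exists_mem_bag (mem_univ w)
      exact ⟨y, fun h => absurd h ht, fun _ => hσ.trans (extNbhdFinset_subset_prodBag hy hw)⟩
  choose g hg using this
  exact ⟨g, (hg _).1 rfl, fun t ht => (hg t).2 ht⟩

end Product

end RTDOn

open RTDOn

lemma exists_widthLe_treewidth {V : Type} [Fintype V] [DecidableEq V] {G : SimpleGraph V}
    (D : RTD V G) : ∃ F : RTD V G, F.widthLe (treewidth G) :=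
  Nat.sInf_mem (s := {w | ∃ F : RTD V G, F.widthLe w})
    ⟨Fintype.card V, D, fun _ => (card_le_univ _).trans (Nat.le_succ _)⟩

theorem stmt4_general {V : Type} [Fintype V] [DecidableEq V] (G : SimpleGraph V)
    (k l : ℕ) (hG : G.Connected) (htw : treewidth G < k)
    (hkl : k ≤ l)
    (ℬ : Finset (Finset V)) (D : RTD V G)
    (hcap : D.captures ℬ) (ha : D.adhesionLe l) :
    ∃ D' : RTD V G, D'.captures (belowFam ℬ ((k + 1) * l)) ∧
      D'.widthLe ((k + 1) * l - 1) := by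
  obtain ⟨F, hF⟩ := exists_widthLe_treewidth D
  have hFk : ∀ x, (F.bag x).card ≤ k := fun x => by have := hF x; omega
  obtain ⟨g, hg₀, hg⟩ :=
    exists_prodParent_gluing _ F (splitByComponents_adhesionsAttached (D := D) hG)
  have hcard := card_prodBag_le hFk (splitByComponents_adhesionLe hG ha) (by omega)
  refine ⟨(D.splitByComponents hG).prodDecomp F g hg₀ hg, fun p => ?_, fun p => ?_⟩
  · simp only [belowFam, mem_filter, mem_univ, true_and]
    exact ⟨hcard p, D.bag p.1.node, hcap _,
      (prodBag_subset_bag p).trans (splitBag_subset_bag p.1)⟩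
  · have hpos : 0 < (k + 1) * l := Nat.mul_pos k.succ_pos (by omega)
    exact (hcard p).trans (by omega)

/-- If `ℬ` captures a tree decomposition of a connected graph `G` of
treewidth `< k`, with width at most `k'` and adhesion width at most `ℓ` (`k ≤ ℓ ≤ k'`),
then `ℬ^{≤(k+1)ℓ}` captures some tree decomposition of width at most `(k+1)ℓ − 1`. -/
theorem stmt4 {V : Type} [Fintype V] [DecidableEq V] (G : SimpleGraph V)
    (k k' l : ℕ) (hG : G.Connected) (htw : treewidth G < k)
    (hkl : k ≤ l) (hlk : l ≤ k')
    (ℬ : Finset (Finset V)) (D : RTD V G)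
    (hcap : D.captures ℬ) (hw : D.widthLe k') (ha : D.adhesionLe l) :
    ∃ D' : RTD V G, D'.captures (belowFam ℬ ((k + 1) * l)) ∧
      D'.widthLe ((k + 1) * l - 1) :=
  stmt4_general G k l hG htw hkl ℬ D hcap ha
end

section
/- Let G be a finite graph of treewidth less than k and let S ⊆ V(G). Then there exists a separation (A,B) of G of order at most k that is 2/3-balanced for S, i.e., |(A∖B) ∩ S| ≤ (2/3)|S| and |(B∖A) ∩ S| ≤ (2/3)|S|. -/
/-!
Root a tree decomposition with bags of size at most `k` and pick a deepest node `t` whose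
subtree carries at least a third of `S`. Removing the bag of `t` leaves the vertices outside the
subtree of `t` (at most two thirds of `S`) and, for each child `c` of `t`, the vertices in the
subtree of `c` (less than a third of `S`, as `c` is deeper), with no edges between these parts.
Grouping them greedily into two sides of weight at most `2|S|/3` each gives the separation,
whose separator is the bag of `t`.
-/

lemma exists_subset_balanced_sum {ι : Type*} [DecidableEq ι] (I : Finset ι) (w : ι → ℕ)
    (N : ℕ) (hw : ∀ i ∈ I, 3 * w i ≤ 2 * N) (hsum : ∑ i ∈ I, w i ≤ N) :
    ∃ F ⊆ I, 3 * ∑ i ∈ F, w i ≤ 2 * N ∧ 3 * ∑ i ∈ I \ F, w i ≤ 2 * N := by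
  obtain ⟨F, hF, hmax⟩ := (I.powerset.filter fun F => 3 * ∑ i ∈ F, w i ≤ 2 * N)
    |>.exists_max_image (fun F => ∑ i ∈ F, w i) ⟨∅, by simp⟩
  rw [Finset.mem_filter, Finset.mem_powerset] at hF
  refine ⟨F, hF.1, hF.2, ?_⟩
  have hsplit := Finset.sum_sdiff hF.1 (f := w)
  by_contra! hbig
  obtain ⟨i, hi, hwi⟩ := Finset.exists_ne_zero_of_sum_ne_zero (s := I \ F) (f := w) (by omega)
  rw [Finset.mem_sdiff] at hi
  -- `F` weighs less than `N / 3`, so either `i` can be added to `F` or `{i}` alone beats `F`.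
  by_cases hfit : 3 * (w i + ∑ j ∈ F, w j) ≤ 2 * N
  · have := hmax (insert i F) (by
      simp [Finset.insert_subset_iff, hi.1, hF.1, Finset.sum_insert hi.2, hfit])
    rw [Finset.sum_insert hi.2] at this
    omega
  · have := hmax {i} (by simp [hi.1, hw i hi.1])
    rw [Finset.sum_singleton] at this
    omega

section Separation

variable {V : Type} [DecidableEq V]

lemma card_filter_notMem_and_mem_eq_sum {ι : Type*} [DecidableEq ι] (X S : Finset V)
    (π : V → ι) (J : Finset ι) :
    (S.filter fun v => v ∉ X ∧ π v ∈ J).card =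
      ∑ i ∈ J, (S.filter fun v => v ∉ X ∧ π v = i).card := by
  rw [Finset.card_eq_sum_card_fiberwise (f := π) (t := J)
    fun v hv => (Finset.mem_filter.1 hv).2.2]
  refine Finset.sum_congr rfl fun i hi => congrArg Finset.card ?_
  ext v
  simp only [Finset.mem_filter]
  constructor
  · rintro ⟨⟨hS, hX, -⟩, rfl⟩
    exact ⟨hS, hX, rfl⟩
  · rintro ⟨hS, hX, rfl⟩
    exact ⟨⟨hS, hX, hi⟩, rfl⟩

/-- The label `π v` stands for the component of `G - X` containing `v`. -/
lemma exists_balanced_separation_of_labelling [Fintype V] {ι : Type*} [DecidableEq ι]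
    (G : SimpleGraph V) (X S : Finset V) (π : V → ι)
    (hπ : ∀ u v, u ∉ X → v ∉ X → G.Adj u v → π u = π v)
    (hw : ∀ i, 3 * (S.filter fun v => v ∉ X ∧ π v = i).card ≤ 2 * S.card) :
    ∃ A B : Finset V, IsSeparation G A B ∧ A ∩ B = X ∧
      3 * ((A \ B) ∩ S).card ≤ 2 * S.card ∧ 3 * ((B \ A) ∩ S).card ≤ 2 * S.card := by
  set I := S.image π
  obtain ⟨F, -, hF, hIF⟩ := exists_subset_balanced_sum I
    (fun i => (S.filter fun v => v ∉ X ∧ π v = i).card) S.card (fun i _ => hw i) (by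
      rw [← card_filter_notMem_and_mem_eq_sum]
      exact Finset.card_filter_le _ _)
  refine ⟨Finset.univ.filter fun v => v ∈ X ∨ π v ∈ F,
    Finset.univ.filter fun v => v ∈ X ∨ π v ∉ F, ⟨?_, ?_⟩, ?_, ?_, ?_⟩
  · ext v
    simp only [Finset.mem_union, Finset.mem_filter, Finset.mem_univ, true_and]
    tauto
  · simp only [Finset.mem_filter, Finset.mem_univ, true_and, not_or, not_not]
    intro a _ ha b _ hb hab
    exact hb.2 (hπ a b ha.1 hb.1 hab ▸ ha.2)
  · ext v
    simp only [Finset.mem_inter, Finset.mem_filter, Finset.mem_univ, true_and]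
    tauto
  · convert hF using 2
    rw [← card_filter_notMem_and_mem_eq_sum]
    congr 1
    ext v
    simp only [Finset.mem_inter, Finset.mem_sdiff, Finset.mem_filter, Finset.mem_univ, true_and]
    tauto
  · convert hIF using 2
    rw [← card_filter_notMem_and_mem_eq_sum]
    congr 1
    ext v
    simp only [Finset.mem_inter, Finset.mem_sdiff, Finset.mem_filter, Finset.mem_univ, true_and,
      not_or]
    constructor
    · rintro ⟨⟨-, hX, hF⟩, hS⟩
      exact ⟨hS, hX, Finset.mem_image_of_mem π hS, hF⟩
    · rintro ⟨hS, hX, -, hF⟩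
      exact ⟨⟨Or.inr hF, hX, hF⟩, hS⟩

end Separation

section TreeDecomposition

variable {V : Type} [Fintype V] [DecidableEq V] {G : SimpleGraph V}

namespace RTDOn

variable {W : Finset V} (D : RTDOn V G W)

def depth (t : D.ι) : ℕ := Nat.find (D.reaches_root t)

lemma depth_lt_depth_of_parent_eq {c t : D.ι} (hc : D.parent c = t) (hct : c ≠ t) :
    D.depth t < D.depth c := by
  obtain ⟨m, hm⟩ : ∃ m, D.depth c = m + 1 := by
    refine Nat.exists_eq_add_one_of_ne_zero fun h0 => hct ?_
    have hroot := Nat.find_spec (D.reaches_root c)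
    rw [show Nat.find (D.reaches_root c) = 0 from h0, Function.iterate_zero_apply] at hroot
    rw [← hc, hroot, D.parent_root]
  have hreach : D.parent^[m] t = D.root := by
    have h : D.parent^[D.depth c] c = D.root := Nat.find_spec (D.reaches_root c)
    rwa [hm, Function.iterate_succ_apply, hc] at h
  exact hm ▸ Nat.lt_succ_of_le (Nat.find_min' _ hreach)

lemma exists_deepest (P : D.ι → Prop) (hroot : P D.root) :
    ∃ t, P t ∧ ∀ c, D.parent c = t → c ≠ t → ¬P c := by
  classical
  obtain ⟨t, ht, hmax⟩ := (Finset.univ.filter P).exists_max_image D.depth ⟨D.root, by simpa⟩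
  refine ⟨t, (Finset.mem_filter.1 ht).2, fun c hc hct hPc => ?_⟩
  have := hmax c (by simpa)
  have := D.depth_lt_depth_of_parent_eq hc hct
  omega

/-- The nodes whose bags contain `v` form a subtree, so it enters the subtree below `c` only
through the tree edge from `c` to its parent. -/
lemma mem_bag_parent_of_mem_bag {v : V} {c s s' : D.ι} (hv : v ∈ W) (hs : v ∈ D.bag s)
    (hsc : ∃ n, D.parent^[n] s = c) (hs' : v ∈ D.bag s') (hs'c : ¬∃ n, D.parent^[n] s' = c) :
    v ∈ D.bag (D.parent c) := by
  obtain ⟨p⟩ := (D.bags_connected v hv).preconnected ⟨s, hs⟩ ⟨s', hs'⟩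
  obtain ⟨d, -, ⟨n, hn⟩, hout⟩ :=
    p.exists_boundary_dart {x | ∃ n, D.parent^[n] x.1 = c} hsc hs'c
  have hadj := d.adj
  simp only [SimpleGraph.comap_adj, Function.Embedding.subtype_apply,
    SimpleGraph.fromRel_adj] at hadj
  rcases hadj.2 with hup | hdown
  · cases n with
    | zero =>
      rw [Function.iterate_zero_apply] at hn
      exact hn ▸ hup ▸ d.snd.2
    | succ m =>
      exact absurd ⟨m, by rwa [← hup, ← Function.iterate_succ_apply]⟩ hout
  · exact absurd ⟨n + 1, by rwa [Function.iterate_succ_apply, hdown]⟩ hout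

lemma mem_gammaSet_iff_of_mem_bag {v : V} {c s : D.ι} (hv : v ∈ W) (hs : v ∈ D.bag s)
    (hvc : v ∉ D.bag (D.parent c)) : v ∈ D.gammaSet c ↔ ∃ n, D.parent^[n] s = c := by
  refine ⟨fun ⟨s₀, hs₀c, hs₀⟩ => ?_, fun hsc => ⟨s, hsc, hs⟩⟩
  by_contra hsc
  exact hvc (D.mem_bag_parent_of_mem_bag hv hs₀ hs₀c hs hsc)

lemma exists_child_mem_gammaSet {v : V} {t : D.ι} (hv : v ∈ D.gammaSet t) (hvt : v ∉ D.bag t) :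
    ∃ c, D.parent c = t ∧ c ≠ t ∧ v ∈ D.gammaSet c := by
  classical
  obtain ⟨s, hst, hs⟩ := hv
  obtain ⟨m, hm⟩ : ∃ m, Nat.find hst = m + 1 := by
    refine Nat.exists_eq_add_one_of_ne_zero fun h0 => hvt ?_
    have hfind := Nat.find_spec hst
    rw [h0, Function.iterate_zero_apply] at hfind
    exact hfind ▸ hs
  refine ⟨D.parent^[m] s, ?_, fun h => Nat.find_min hst (by omega) h, s, ⟨m, rfl⟩, hs⟩
  have h := Nat.find_spec hst
  rwa [hm, Function.iterate_succ_apply'] at h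

lemma mem_gammaSet_root {v : V} (hv : v ∈ W) : v ∈ D.gammaSet D.root := by
  obtain ⟨⟨s, hs⟩⟩ := (D.bags_connected v hv).nonempty
  exact ⟨s, D.reaches_root s, hs⟩

end RTDOn

theorem RTDOn.exists_balanced_separation (D : RTD V G) (S : Finset V) :
    ∃ t A B, IsSeparation G A B ∧ A ∩ B = D.bag t ∧
      3 * ((A \ B) ∩ S).card ≤ 2 * S.card ∧ 3 * ((B \ A) ∩ S).card ≤ 2 * S.card := by
  classical
  obtain ⟨t, hheavy, hlight⟩ := D.exists_deepest
    (fun c => S.card ≤ 3 * (S.filter (· ∈ D.gammaSet c)).card)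
    (by simp [D.mem_gammaSet_root]; omega)
  let π : V → Set D.ι := fun v => {c | D.parent c = t ∧ c ≠ t ∧ v ∈ D.gammaSet c}
  have hπ : ∀ u v, u ∉ D.bag t → v ∉ D.bag t → G.Adj u v → π u = π v := by
    intro u v hu hv huv
    obtain ⟨s, hus, hvs⟩ := D.edge_in_bag u (Finset.mem_univ u) v (Finset.mem_univ v) huv
    refine Set.ext fun c => and_congr_right fun hc => and_congr_right fun _ => ?_
    rw [D.mem_gammaSet_iff_of_mem_bag (Finset.mem_univ u) hus (hc ▸ hu),
      D.mem_gammaSet_iff_of_mem_bag (Finset.mem_univ v) hvs (hc ▸ hv)]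
  refine ⟨t, exists_balanced_separation_of_labelling G (D.bag t) S π hπ fun L => ?_⟩
  by_cases hL : ∃ c, D.parent c = t ∧ c ≠ t ∧ c ∈ L
  · obtain ⟨c, hc, hct, hcL⟩ := hL
    have hsub : (S.filter fun v => v ∉ D.bag t ∧ π v = L) ⊆ S.filter (· ∈ D.gammaSet c) :=
      Finset.monotone_filter_right S fun v _ ⟨_, hvL⟩ => (hvL ▸ hcL : c ∈ π v).2.2
    have := Finset.card_le_card hsub
    have := hlight c hc hct
    omega
  · have hsub :
        (S.filter fun v => v ∉ D.bag t ∧ π v = L) ⊆ S.filter (· ∉ D.gammaSet t) := by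
      refine Finset.monotone_filter_right S fun v _ ⟨hvt, hvL⟩ hvγ => hL ?_
      obtain ⟨c, hc, hct, hvc⟩ := D.exists_child_mem_gammaSet hvγ hvt
      exact ⟨c, hc, hct, hvL ▸ ⟨hc, hct, hvc⟩⟩
    have := Finset.card_le_card hsub
    have := Finset.card_filter_add_card_filter_not (s := S) (· ∈ D.gammaSet t)
    omega

def RTDOn.singleBag (G : SimpleGraph V) (W : Finset V) : RTDOn V G W where
  ι := Unit
  instFintype := inferInstance
  instDecEq := inferInstance
  root := ()
  parent := id
  parent_root := rfl
  reaches_root _ := ⟨0, rfl⟩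
  bag _ := W
  bag_subset _ := subset_rfl
  bags_connected _ hv := @SimpleGraph.Connected.of_subsingleton _ _ ⟨⟨(), hv⟩⟩ _
  edge_in_bag _ hu _ hv _ := ⟨(), hu, hv⟩

lemma exists_rtd_card_bag_le_of_treewidth_lt (G : SimpleGraph V) {k : ℕ}
    (htw : treewidth G < k) : ∃ D : RTD V G, ∀ t, (D.bag t).card ≤ k := by
  obtain ⟨D, hD⟩ := Nat.sInf_mem (s := {w : ℕ | ∃ D : RTD V G, D.widthLe w})
    ⟨Fintype.card V, RTDOn.singleBag G Finset.univ, fun _ => Nat.le_succ _⟩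
  exact ⟨D, fun t => (hD t).trans htw⟩

end TreeDecomposition

/-- Every graph of treewidth `< k` has, for any vertex set `S`, a
separation of order at most `k` that is `2/3`-balanced for `S`. -/
theorem stmt16 {V : Type} [Fintype V] [DecidableEq V] (k : ℕ)
    (G : SimpleGraph V) (htw : treewidth G < k) (S : Finset V) :
    ∃ A B : Finset V, IsSeparation G A B ∧ (A ∩ B).card ≤ k ∧
      3 * ((A \ B) ∩ S).card ≤ 2 * S.card ∧
      3 * ((B \ A) ∩ S).card ≤ 2 * S.card := by
  obtain ⟨D, hD⟩ := exists_rtd_card_bag_le_of_treewidth_lt G htw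
  obtain ⟨t, A, B, hAB, hX, hA, hB⟩ := D.exists_balanced_separation S
  exact ⟨A, B, hAB, hX ▸ hD t, hA, hB⟩
end

section
/- Let G be a finite connected graph on n ≥ 2 vertices. Then there exists a rooted tree decomposition (T,β) of G such that: (1) for every node t ∈ V(T), the induced subgraph G[β(t)] is clique-separator free; (2) every adhesion β(s) ∩ β(t) for an edge st of T is a clique in G; and (3) T has at most n − 1 nodes. -/
/-!
If `G[W]` has a clique separation, take one with a prescribed clique `C` on its left side and with
inclusion-minimal right side `B`. Then `G[B]` is clique-separator free: a clique separation of
`G[B]` has the old separator `A ∩ B` on one side and merges with `(A, B)` into a clique separation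
with a smaller right side. Decompose `G[A]` recursively and hang `B` as a new leaf below a bag
containing the clique `A ∩ B`. Every leaf brings a vertex outside all earlier bags, so the
decomposition of `G[W]` has at most `|W| - |C| + 1` nodes, which is `n - 1` when `C` is an edge.
-/

namespace SimpleGraph

variable {V : Type} [DecidableEq V] {G : SimpleGraph V} {W A B A' B' K : Finset V}

def IsSepOn (G : SimpleGraph V) (W A B : Finset V) : Prop :=
  A ∪ B = W ∧ ∀ a ∈ A, a ∉ B → ∀ b ∈ B, b ∉ A → ¬G.Adj a b

def IsCliqueSepOn (G : SimpleGraph V) (W A B : Finset V) : Prop :=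
  G.IsSepOn W A B ∧ (A \ B).Nonempty ∧ (B \ A).Nonempty ∧ G.IsClique (↑(A ∩ B) : Set V)

theorem cliqueSepFreeOn_iff : CliqueSepFreeOn G W ↔ ¬∃ A B, G.IsCliqueSepOn W A B := by
  simp only [CliqueSepFreeOn, IsCliqueSepOn, IsSepOn, and_assoc]

theorem IsSepOn.symm (h : G.IsSepOn W A B) : G.IsSepOn W B A :=
  ⟨Finset.union_comm A B ▸ h.1, fun a ha ha' b hb hb' hab => h.2 b hb hb' a ha ha' hab.symm⟩

theorem IsCliqueSepOn.symm (h : G.IsCliqueSepOn W A B) : G.IsCliqueSepOn W B A :=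
  ⟨h.1.symm, h.2.2.1, h.2.1, Finset.inter_comm A B ▸ h.2.2.2⟩

theorem IsSepOn.left_subset (h : G.IsSepOn W A B) : A ⊆ W :=
  h.1 ▸ Finset.subset_union_left

theorem IsSepOn.right_subset (h : G.IsSepOn W A B) : B ⊆ W :=
  h.1 ▸ Finset.subset_union_right

theorem IsSepOn.subset_or_subset_of_isClique (h : G.IsSepOn W A B) (hKW : K ⊆ W)
    (hK : G.IsClique (K : Set V)) : K ⊆ A ∨ K ⊆ B := by
  by_contra! hAB
  obtain ⟨⟨x, hxK, hxA⟩, ⟨y, hyK, hyB⟩⟩ := And.intro (Finset.not_subset.1 hAB.1)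
    (Finset.not_subset.1 hAB.2)
  have hxB : x ∈ B := (Finset.mem_union.1 (h.1 ▸ hKW hxK)).resolve_left hxA
  have hyA : y ∈ A := (Finset.mem_union.1 (h.1 ▸ hKW hyK)).resolve_right hyB
  exact h.2 y hyA hyB x hxB hxA (hK hyK hxK fun hyx => hxA (hyx ▸ hyA))

theorem IsCliqueSepOn.union_left (h : G.IsCliqueSepOn W A B) (h' : G.IsCliqueSepOn B A' B')
    (hS : A ∩ B ⊆ A') : G.IsCliqueSepOn W (A ∪ A') B' := by
  obtain ⟨⟨hW, hAB⟩, ⟨x, hx⟩, -, -⟩ := h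
  obtain ⟨⟨hB, hAB'⟩, -, ⟨z, hz⟩, hS'⟩ := h'
  simp only [Finset.mem_sdiff] at hx hz
  have hB'B : B' ⊆ B := hB ▸ Finset.subset_union_right
  refine ⟨⟨?_, ?_⟩, ⟨x, ?_⟩, ⟨z, ?_⟩, hS'.subset ?_⟩
  · rw [Finset.union_assoc, hB, hW]
  · intro a ha haB' b hb hbA
    simp only [Finset.mem_union, not_or] at ha hbA
    by_cases haA' : a ∈ A'
    · exact hAB' a haA' haB' b hb hbA.2
    · refine hAB a (ha.resolve_right haA') (fun haB => haA' (hS ?_)) b (hB'B hb) hbA.1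
      exact Finset.mem_inter.2 ⟨ha.resolve_right haA', haB⟩
  · exact Finset.mem_sdiff.2 ⟨Finset.mem_union_left _ hx.1, fun h => hx.2 (hB'B h)⟩
  · refine Finset.mem_sdiff.2 ⟨hz.1, fun h => ?_⟩
    rcases Finset.mem_union.1 h with hzA | hzA'
    · exact hz.2 (hS (Finset.mem_inter.2 ⟨hzA, hB'B hz.1⟩))
    · exact hz.2 hzA'
  · intro v hv
    simp only [Finset.coe_inter, Finset.coe_union, Set.mem_inter_iff, Set.mem_union,
      Finset.mem_coe] at hv ⊢
    exact ⟨hv.1.elim (fun hvA => hS (Finset.mem_inter.2 ⟨hvA, hB'B hv.2⟩)) id, hv.2⟩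

theorem IsCliqueSepOn.right_ssubset (h : G.IsCliqueSepOn W A B) : B ⊂ W := by
  obtain ⟨x, hx⟩ := h.2.1
  rw [Finset.mem_sdiff] at hx
  exact Finset.ssubset_iff_subset_ne.2
    ⟨h.1.right_subset, fun hBW => hx.2 (hBW ▸ h.1.left_subset hx.1)⟩

theorem IsCliqueSepOn.exists_cliqueSepFreeOn_right (h : G.IsCliqueSepOn W A B) :
    ∃ A' B', G.IsCliqueSepOn W A' B' ∧ A ⊆ A' ∧ CliqueSepFreeOn G B' := by
  induction B using Finset.strongInduction generalizing A with
  | H B ih =>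
    by_cases hB : CliqueSepFreeOn G B
    · exact ⟨A, B, h, subset_rfl, hB⟩
    obtain ⟨A₁, B₁, h₁⟩ := not_not.1 (cliqueSepFreeOn_iff.not.1 hB)
    have hSB : A ∩ B ⊆ B := Finset.inter_subset_right
    wlog hS : A ∩ B ⊆ A₁ generalizing A₁ B₁
    · exact this B₁ A₁ h₁.symm ((h₁.1.subset_or_subset_of_isClique hSB h.2.2.2).resolve_left hS)
    obtain ⟨A', B', h', hA', hB'⟩ := ih B₁ h₁.right_ssubset (h.union_left h₁ hS)
    exact ⟨A', B', h', Finset.subset_union_left.trans hA', hB'⟩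

theorem exists_isCliqueSepOn_cliqueSepFreeOn_right {C : Finset V} (hCW : C ⊆ W)
    (hC : G.IsClique (C : Set V)) (hW : ¬CliqueSepFreeOn G W) :
    ∃ A B, G.IsCliqueSepOn W A B ∧ C ⊆ A ∧ CliqueSepFreeOn G B := by
  obtain ⟨A, B, h⟩ := not_not.1 (cliqueSepFreeOn_iff.not.1 hW)
  wlog hCA : C ⊆ A generalizing A B
  · exact this B A h.symm ((h.1.subset_or_subset_of_isClique hCW hC).resolve_left hCA)
  obtain ⟨A', B', h', hAA', hB'⟩ := h.exists_cliqueSepFreeOn_right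
  exact ⟨A', B', h', hCA.trans hAA', hB'⟩

end SimpleGraph

/-- Nodes are `0, …, size - 1`, with root `0` and every other node after its parent.
`exists_top` encodes the subtree condition: the nodes whose bags contain `v` hang below one
of them. -/
structure CliqueDecomp {V : Type} [DecidableEq V] (G : SimpleGraph V) (W : Finset V) where
  size : ℕ
  bag : ℕ → Finset V
  parent : ℕ → ℕ
  size_pos : 0 < size
  parent_zero : parent 0 = 0
  parent_lt : ∀ t, 0 < t → t < size → parent t < t
  bag_subset : ∀ t < size, bag t ⊆ W
  cliqueSepFreeOn_bag : ∀ t < size, CliqueSepFreeOn G (bag t)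
  isClique_adhesion : ∀ t, 0 < t → t < size → G.IsClique (↑(bag t ∩ bag (parent t)) : Set V)
  exists_bag_superset : ∀ K ⊆ W, G.IsClique (K : Set V) → ∃ t < size, K ⊆ bag t
  exists_top : ∀ v ∈ W, ∃ t₀ < size, v ∈ bag t₀ ∧
    ∀ t < size, v ∈ bag t → t ≠ t₀ → 0 < t ∧ v ∈ bag (parent t)

namespace CliqueDecomp

variable {V : Type} [DecidableEq V] {G : SimpleGraph V} {W A B : Finset V}

def single (hW : CliqueSepFreeOn G W) : CliqueDecomp G W where
  size := 1
  bag _ := W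
  parent _ := 0
  size_pos := one_pos
  parent_zero := rfl
  parent_lt t ht ht1 := by omega
  bag_subset _ _ := subset_rfl
  cliqueSepFreeOn_bag _ _ := hW
  isClique_adhesion t ht ht1 := by omega
  exists_bag_superset K hK _ := ⟨0, one_pos, hK⟩
  exists_top v hv := ⟨0, one_pos, hv, fun t ht _ ht0 => by omega⟩

theorem parent_lt_size (D : CliqueDecomp G W) {t : ℕ} (ht : t < D.size) : D.parent t < D.size := by
  rcases Nat.eq_zero_or_pos t with rfl | ht0
  · rw [D.parent_zero]; exact D.size_pos
  · exact (D.parent_lt t ht0 ht).trans ht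

def addLeaf (D : CliqueDecomp G A) (hAB : G.IsCliqueSepOn W A B) (hB : CliqueSepFreeOn G B)
    (a : ℕ) (ha : a < D.size) (haS : A ∩ B ⊆ D.bag a) : CliqueDecomp G W where
  size := D.size + 1
  bag := Function.update D.bag D.size B
  parent := Function.update D.parent D.size a
  size_pos := D.size.succ_pos
  parent_zero := by
    rw [Function.update_of_ne D.size_pos.ne, D.parent_zero]
  parent_lt t ht0 ht := by
    rcases Nat.lt_succ_iff_lt_or_eq.1 ht with ht | rfl
    · rw [Function.update_of_ne ht.ne]; exact D.parent_lt t ht0 ht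
    · rwa [Function.update_self]
  bag_subset t ht := by
    rcases Nat.lt_succ_iff_lt_or_eq.1 ht with ht | rfl
    · rw [Function.update_of_ne ht.ne]; exact (D.bag_subset t ht).trans hAB.1.left_subset
    · rw [Function.update_self]; exact hAB.1.right_subset
  cliqueSepFreeOn_bag t ht := by
    rcases Nat.lt_succ_iff_lt_or_eq.1 ht with ht | rfl
    · rw [Function.update_of_ne ht.ne]; exact D.cliqueSepFreeOn_bag t ht
    · rwa [Function.update_self]
  isClique_adhesion t ht0 ht := by
    rcases Nat.lt_succ_iff_lt_or_eq.1 ht with ht | rfl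
    · rw [Function.update_of_ne ht.ne, Function.update_of_ne ht.ne,
        Function.update_of_ne ((D.parent_lt t ht0 ht).trans ht).ne]
      exact D.isClique_adhesion t ht0 ht
    · rw [Function.update_self, Function.update_self, Function.update_of_ne ha.ne]
      refine hAB.2.2.2.subset fun v hv => ?_
      simp only [Finset.coe_inter, Set.mem_inter_iff, Finset.mem_coe] at hv ⊢
      exact ⟨D.bag_subset a ha hv.2, hv.1⟩
  exists_bag_superset K hKW hK := by
    rcases hAB.1.subset_or_subset_of_isClique hKW hK with hKA | hKB
    · obtain ⟨t, ht, hKt⟩ := D.exists_bag_superset K hKA hK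
      exact ⟨t, ht.trans D.size.lt_succ_self, by rwa [Function.update_of_ne ht.ne]⟩
    · exact ⟨D.size, D.size.lt_succ_self, by rwa [Function.update_self]⟩
  exists_top v hv := by
    by_cases hvA : v ∈ A
    · obtain ⟨t₀, ht₀, hvt₀, htop⟩ := D.exists_top v hvA
      refine ⟨t₀, ht₀.trans D.size.lt_succ_self, by rwa [Function.update_of_ne ht₀.ne], ?_⟩
      intro t ht hvt htt₀
      rcases Nat.lt_succ_iff_lt_or_eq.1 ht with ht | rfl
      · rw [Function.update_of_ne ht.ne] at hvt
        obtain ⟨ht0, hvp⟩ := htop t ht hvt htt₀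
        rw [Function.update_of_ne ht.ne,
          Function.update_of_ne ((D.parent_lt t ht0 ht).trans ht).ne]
        exact ⟨ht0, hvp⟩
      · rw [Function.update_self] at hvt
        rw [Function.update_self, Function.update_of_ne ha.ne]
        exact ⟨D.size_pos, haS (Finset.mem_inter.2 ⟨hvA, hvt⟩)⟩
    · have hvB : v ∈ B := (Finset.mem_union.1 (hAB.1.1 ▸ hv)).resolve_left hvA
      refine ⟨D.size, D.size.lt_succ_self, by rwa [Function.update_self], ?_⟩
      intro t ht hvt htt₀
      have ht : t < D.size := by omega
      rw [Function.update_of_ne ht.ne] at hvt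
      exact absurd (D.bag_subset t ht hvt) hvA

theorem exists_size_add_card_le (G : SimpleGraph V) {C : Finset V} (hCW : C ⊆ W)
    (hC : G.IsClique (C : Set V)) : ∃ D : CliqueDecomp G W, D.size + C.card ≤ W.card + 1 := by
  induction W using Finset.strongInduction with
  | H W ih =>
    by_cases hW : CliqueSepFreeOn G W
    · exact ⟨single hW, by simp only [single]; have := Finset.card_le_card hCW; omega⟩
    obtain ⟨A, B, hAB, hCA, hB⟩ := G.exists_isCliqueSepOn_cliqueSepFreeOn_right hCW hC hW
    have hAW : A ⊂ W := hAB.symm.right_ssubset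
    obtain ⟨D, hD⟩ := ih A hAW hCA
    obtain ⟨a, ha, haS⟩ := D.exists_bag_superset (A ∩ B) Finset.inter_subset_left hAB.2.2.2
    refine ⟨D.addLeaf hAB hB a ha haS, ?_⟩
    have := Finset.card_lt_card hAW
    simp only [addLeaf]
    omega

end CliqueDecomp

section ParentFunction

variable {ι : Type*} [Preorder ι] [WellFoundedLT ι] {f : ι → ι} {r : ι}

theorem exists_iterate_eq_of_lt (hf : ∀ t, t ≠ r → f t < t) (t : ι) : ∃ n, f^[n] t = r := by
  induction t using WellFoundedLT.induction with
  | _ t ih =>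
    by_cases htr : t = r
    · exact ⟨0, htr⟩
    obtain ⟨n, hn⟩ := ih (f t) (hf t htr)
    exact ⟨n + 1, hn⟩

theorem connected_induce_fromRel_of_lt {S : Set ι} (hr : r ∈ S)
    (hS : ∀ t ∈ S, t ≠ r → f t < t ∧ f t ∈ S) :
    ((SimpleGraph.fromRel fun s t => f s = t).induce S).Connected := by
  have hreach : ∀ t (ht : t ∈ S),
      ((SimpleGraph.fromRel fun s t => f s = t).induce S).Reachable ⟨t, ht⟩ ⟨r, hr⟩ := by
    intro t
    induction t using WellFoundedLT.induction with
    | _ t ih =>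
      intro ht
      by_cases htr : t = r
      · subst htr; rfl
      obtain ⟨hlt, hfS⟩ := hS t ht htr
      have hadj : ((SimpleGraph.fromRel fun s t => f s = t).induce S).Adj ⟨t, ht⟩ ⟨f t, hfS⟩ :=
        ⟨hlt.ne', Or.inl rfl⟩
      exact hadj.reachable.trans (ih (f t) hlt hfS)
  rw [SimpleGraph.connected_iff]
  exact ⟨fun a b => (hreach a a.2).trans (hreach b b.2).symm, ⟨⟨r, hr⟩⟩⟩

end ParentFunction

namespace CliqueDecomp

variable {V : Type} [Fintype V] [DecidableEq V] {G : SimpleGraph V}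

def toRTD (D : CliqueDecomp G Finset.univ) : RTD V G where
  ι := Fin D.size
  instFintype := inferInstance
  instDecEq := inferInstance
  root := ⟨0, D.size_pos⟩
  parent t := ⟨D.parent t, D.parent_lt_size t.2⟩
  parent_root := Fin.ext D.parent_zero
  reaches_root := exists_iterate_eq_of_lt fun t ht =>
    D.parent_lt t (Nat.pos_of_ne_zero fun h => ht (Fin.ext h)) t.2
  bag t := D.bag t
  bag_subset _ := Finset.subset_univ _
  bags_connected v _ := by
    obtain ⟨t₀, ht₀, hvt₀, htop⟩ := D.exists_top v (Finset.mem_univ v)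
    refine connected_induce_fromRel_of_lt (r := ⟨t₀, ht₀⟩) hvt₀ fun t hvt htt₀ => ?_
    obtain ⟨ht0, hvp⟩ := htop t t.2 hvt fun h => htt₀ (Fin.ext h)
    exact ⟨D.parent_lt t ht0 t.2, hvp⟩
  edge_in_bag u _ w _ huw := by
    obtain ⟨t, ht, hsub⟩ := D.exists_bag_superset {u, w} (Finset.subset_univ _)
      (by rw [Finset.coe_pair]; exact SimpleGraph.isClique_pair.2 fun _ => huw)
    exact ⟨⟨t, ht⟩, hsub (Finset.mem_insert_self u _), hsub (Finset.mem_insert_of_mem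
      (Finset.mem_singleton_self w))⟩

end CliqueDecomp

/-- Every finite connected graph on `n ≥ 2` vertices admits a rooted tree
decomposition whose bags induce clique-separator-free subgraphs, whose adhesions are
cliques, and which has at most `n − 1` nodes (clique minimal separator decomposition). -/
theorem stmt17 {V : Type} [Fintype V] [DecidableEq V] (G : SimpleGraph V)
    (hG : G.Connected) (hn : 2 ≤ Fintype.card V) :
    ∃ D : RTD V G,
      (∀ t, CliqueSepFreeOn G (D.bag t)) ∧
      (∀ t, t ≠ D.root → G.IsClique (↑(D.bag t ∩ D.bag (D.parent t)) : Set V)) ∧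
      Nat.card D.ι ≤ Fintype.card V - 1 := by
  have : Nontrivial V := Fintype.one_lt_card_iff_nontrivial.1 hn
  obtain ⟨x, y, hxy⟩ := SimpleGraph.ne_bot_iff_exists_adj.1
    fun hbot : G = ⊥ => SimpleGraph.not_connected_bot (hbot ▸ hG)
  obtain ⟨D, hsize⟩ := CliqueDecomp.exists_size_add_card_le G (Finset.subset_univ {x, y})
    (by rw [Finset.coe_pair]; exact SimpleGraph.isClique_pair.2 fun _ => hxy)
  refine ⟨D.toRTD, fun t => D.cliqueSepFreeOn_bag t.1 t.2, fun t ht => ?_, ?_⟩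
  · exact D.isClique_adhesion t.1 (Nat.pos_of_ne_zero fun h => ht (Fin.ext h)) t.2
  · rw [Finset.card_pair hxy.ne, Finset.card_univ] at hsize
    change Nat.card (Fin D.size) ≤ _
    rw [Nat.card_eq_fintype_card, Fintype.card_fin]
    omega
end
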